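/- arXiv:2410.03475 — 7 statements merged into one kernel-verified Lean document; each statement's English description precedes it below -/
import Mathlib

section
/- Let A_0 be a unital C*-algebra with a norm-dense unital *-subalgebra 𝒜_0 ⊆ A_0, let X be a right Hilbert C*-module over A_0 with A_0-valued inner product ⟨·,·⟩ and norm ‖x‖ := ‖⟨x,x⟩‖^{1/2}, and let 𝒳 ⊆ X be a norm-dense vector subspace with 𝒳·𝒜_0 ⊆ 𝒳 and ⟨𝒳,𝒳⟩ ⊆ 𝒜_0. Let L : 𝒳 → [0,∞) be a seminorm and L_0 : 𝒜_0 → [0,∞) a slip-norm. Suppose that the image of {a ∈ 𝒜_0 : L_0(a) ≤ 1} under the quotient map A_0 → A_0/ℂ·1 is totally bounded (equivalently (𝒜_0, L_0) is a compact quantum metric space), that 𝒳 has a finite frame ζ_1,…,ζ_n ∈ 𝒳 (i.e. ∑_{j=1}^n ζ_j·⟨ζ_j, x⟩ = x for all x ∈ 𝒳), and that: (1) there exists C ≥ 0 with ‖x‖ ≤ C·L(x) for all x ∈ 𝒳; (2) there exists C_0 ≥ 0 with L_0(⟨ζ_j, x⟩) ≤ C_0·(L(x) + ‖x‖) for all x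 ∈ 𝒳 and j ∈ {1,…,n}. Then the subset {x ∈ 𝒳 : L(x) ≤ 1} is totally bounded in X. -/
/-!
Statement 1: Finitely generated projective modules over compact quantum metric spaces.
If `(𝒜₀, L₀)` is a compact quantum metric space (encoded via Rieffel's total-boundedness
criterion), `𝒳 ⊆ X` has a finite frame `ζ_1,…,ζ_n`, `‖x‖ ≤ C·L(x)` and
`L₀(⟨ζ_j, x⟩) ≤ C₀·(L(x) + ‖x‖)` on `𝒳`, then `{x ∈ 𝒳 : L(x) ≤ 1}` is totally bounded
in the Hilbert C*-module `X`.
-/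

noncomputable section

open Pointwise Metric

lemma tb_add {E : Type*} [SeminormedAddCommGroup E] {s t : Set E}
    (hs : TotallyBounded s) (ht : TotallyBounded t) : TotallyBounded (s + t) := by
  rw [Metric.totallyBounded_iff] at *
  intro ε hε
  obtain ⟨u, hu, hsu⟩ := hs (ε/2) (by linarith)
  obtain ⟨v, hv, htv⟩ := ht (ε/2) (by linarith)
  refine ⟨u + v, hu.add hv, ?_⟩
  rintro x ⟨a, ha, b, hb, rfl⟩
  obtain ⟨y, hy, hay⟩ := Set.mem_iUnion₂.mp (hsu ha)
  obtain ⟨z, hz, hbz⟩ := Set.mem_iUnion₂.mp (htv hb)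
  refine Set.mem_iUnion₂.mpr ⟨y + z, Set.add_mem_add hy hz, ?_⟩
  simp only [mem_ball] at *
  calc dist (a + b) (y + z) ≤ dist a y + dist b z := dist_add_add_le a b y z
    _ < ε := by linarith

lemma tb_finsetSum {ι : Type*} {E : Type*} [SeminormedAddCommGroup E] (t : Finset ι)
    (f : ι → Set E) (h : ∀ i ∈ t, TotallyBounded (f i)) :
    TotallyBounded (∑ i ∈ t, f i) := by
  classical
  induction t using Finset.induction_on with
  | empty => rw [Finset.sum_empty]; exact isCompact_singleton.totallyBounded
  | insert _ _ hx ih =>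
      rw [Finset.sum_insert hx]
      exact tb_add (h _ (Finset.mem_insert_self _ _))
        (ih fun i hi => h i (Finset.mem_insert_of_mem hi))


lemma tb_of_quotient {A₀ : Type*} [NormedRing A₀] [NormedAlgebra ℂ A₀] {S : Set A₀} {M : ℝ}
    (hb : ∀ a ∈ S, ‖a‖ ≤ M)
    (htb : TotallyBounded (⇑(Submodule.span ℂ ({1} : Set A₀)).mkQ '' S)) :
    TotallyBounded S := by
  set N := Submodule.span ℂ ({1} : Set A₀) with hN
  rcases S.eq_empty_or_nonempty with rfl | ⟨a₀, ha₀⟩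
  · exact totallyBounded_empty
  have hM : 0 ≤ M := le_trans (norm_nonneg a₀) (hb a₀ ha₀)
  rw [Metric.totallyBounded_iff] at htb ⊢
  intro ε hε
  obtain ⟨t, ht, hcov⟩ := htb (ε/4) (by linarith)
  -- representatives
  have hsurj := N.mkQ_surjective
  choose r hr using hsurj
  obtain ⟨B, hB⟩ := (ht.image fun y => ‖r y‖).bddAbove
  simp only [upperBounds, Set.mem_image, Set.mem_setOf_eq] at hB
  -- scalar net
  set R := M + (max B 0 + ε)
  have hR : 0 ≤ R := by simp only [R]; positivity
  have hf : LipschitzWith ‖(1:A₀)‖₊ (fun c : ℂ => c • (1:A₀)) := by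
    apply LipschitzWith.of_dist_le_mul
    intro c d
    rw [dist_eq_norm, dist_eq_norm, ← sub_smul, norm_smul]
    rw [mul_comm]
    rfl
  have hW : TotallyBounded ((fun c : ℂ => c • (1:A₀)) '' closedBall 0 R) :=
    ((isCompact_closedBall (0:ℂ) R).totallyBounded).image hf.uniformContinuous
  rw [Metric.totallyBounded_iff] at hW
  obtain ⟨u, hu, hWu⟩ := hW (ε/4) (by linarith)
  refine ⟨Set.image2 (· + ·) (r '' t) u, (ht.image r).image2 _ hu, ?_⟩
  intro a ha
  obtain ⟨y, hy, hay⟩ := Set.mem_iUnion₂.mp (hcov ⟨a, ha, rfl⟩)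
  rw [mem_ball, dist_eq_norm] at hay
  have hyB : ‖r y‖ ≤ max B 0 := le_trans (hB ⟨y, hy, rfl⟩) (le_max_left _ _)
  -- lift the small quotient difference
  have hquot : ‖N.mkQ (a - r y)‖ < ε/4 := by
    rw [map_sub, hr]; exact hay
  obtain ⟨m, hm, hmlt⟩ := Submodule.Quotient.norm_mk_lt (N.mkQ (a - r y)) (show (0:ℝ) < ε/4 by linarith)
  have hmem : a - r y - m ∈ N := by
    rw [← Submodule.Quotient.mk_eq_zero, Submodule.Quotient.mk_sub]
    rw [show (Submodule.Quotient.mk (a - r y) : A₀ ⧸ N) = N.mkQ (a - r y) from rfl, ← hm]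
    simp
  have hmnorm : ‖m‖ < ε/2 := by
    have : ‖N.mkQ (a - r y)‖ < ε/4 := hquot
    calc ‖m‖ < ‖N.mkQ (a - r y)‖ + ε/4 := hmlt
      _ < ε/2 := by linarith
  obtain ⟨c, hc⟩ := Submodule.mem_span_singleton.mp hmem
  set v := a - r y - m with hv
  have hvnorm : ‖v‖ ≤ R := by
    have h1 : ‖v‖ ≤ ‖a‖ + ‖r y‖ + ‖m‖ := by
      calc ‖a - r y - m‖ ≤ ‖a - r y‖ + ‖m‖ := norm_sub_le _ _
        _ ≤ ‖a‖ + ‖r y‖ + ‖m‖ := by have := norm_sub_le a (r y); linarith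
    have := hb a ha
    simp only [R]; linarith
  have hvW : v ∈ (fun c : ℂ => c • (1:A₀)) '' closedBall 0 R := by
    by_cases h1 : (1:A₀) = 0
    · refine ⟨0, by simpa using hR, ?_⟩
      simp only [zero_smul]
      rw [← hc, h1, smul_zero]
    · refine ⟨c, ?_, hc⟩
      have hone : 1 ≤ ‖(1:A₀)‖ := by
        have h0 : ‖(1:A₀)‖ ≠ 0 := fun h => h1 (norm_eq_zero.mp h)
        have := norm_mul_le (1:A₀) 1
        rw [mul_one] at this
        nlinarith [norm_nonneg (1:A₀), lt_of_le_of_ne (norm_nonneg (1:A₀)) (Ne.symm h0)]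
      rw [mem_closedBall, dist_zero_right]
      calc ‖c‖ ≤ ‖c‖ * ‖(1:A₀)‖ := le_mul_of_one_le_right (norm_nonneg c) hone
        _ = ‖c • (1:A₀)‖ := (norm_smul c (1:A₀)).symm
        _ = ‖v‖ := by rw [hc]
        _ ≤ R := hvnorm
  obtain ⟨w, hw, hvw⟩ := Set.mem_iUnion₂.mp (hWu hvW)
  rw [mem_ball, dist_eq_norm] at hvw
  refine Set.mem_iUnion₂.mpr ⟨r y + w, Set.mem_image2_of_mem ⟨y, hy, rfl⟩ hw, ?_⟩
  rw [mem_ball, dist_eq_norm]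
  have : a - (r y + w) = (v - w) + m := by simp only [hv]; abel
  rw [this]
  calc ‖v - w + m‖ ≤ ‖v - w‖ + ‖m‖ := norm_add_le _ _
    _ < ε := by linarith


theorem finitely_generated_projective_totally_bounded
    -- `A₀` a unital C*-algebra
    {A₀ : Type*} [NormedRing A₀] [StarRing A₀] [CStarRing A₀] [NormedAlgebra ℂ A₀]
    [StarModule ℂ A₀] [CompleteSpace A₀] [PartialOrder A₀] [StarOrderedRing A₀]
    -- `𝒜₀ ⊆ A₀` a norm-dense unital *-subalgebra
    (𝒜₀ : StarSubalgebra ℂ A₀) (hdense : Dense ((𝒜₀ : Set A₀)))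
    -- `X` a right Hilbert C*-module over `A₀`: right action `sm`, inner product `inn`
    {X : Type*} [NormedAddCommGroup X] [Module ℂ X] [CompleteSpace X]
    (sm : X → A₀ → X) (inn : X → X → A₀)
    (h_sm_addl : ∀ (x y : X) (a : A₀), sm (x + y) a = sm x a + sm y a)
    (h_sm_addr : ∀ (x : X) (a b : A₀), sm x (a + b) = sm x a + sm x b)
    (h_sm_mul : ∀ (x : X) (a b : A₀), sm x (a * b) = sm (sm x a) b)
    (h_sm_one : ∀ x : X, sm x 1 = x)
    (h_sm_smul : ∀ (c : ℂ) (x : X) (a : A₀), sm (c • x) a = c • sm x a)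
    (h_inn_addr : ∀ x y z : X, inn x (y + z) = inn x y + inn x z)
    (h_inn_smul : ∀ (c : ℂ) (x y : X), inn x (c • y) = c • inn x y)
    (h_inn_sm : ∀ (x y : X) (a : A₀), inn x (sm y a) = inn x y * a)
    (h_inn_star : ∀ x y : X, star (inn x y) = inn y x)
    (h_inn_pos : ∀ x : X, 0 ≤ inn x x)
    (h_norm : ∀ x : X, ‖x‖ ^ 2 = ‖inn x x‖)
    -- `𝒳 ⊆ X` a norm-dense subspace with `𝒳·𝒜₀ ⊆ 𝒳` and `⟨𝒳, 𝒳⟩ ⊆ 𝒜₀`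
    (𝒳 : Submodule ℂ X) (h𝒳dense : Dense ((𝒳 : Set X)))
    (h𝒳sm : ∀ x ∈ 𝒳, ∀ a ∈ 𝒜₀, sm x a ∈ 𝒳)
    (h𝒳inn : ∀ x ∈ 𝒳, ∀ y ∈ 𝒳, inn x y ∈ 𝒜₀)
    -- `L` a seminorm on `𝒳`
    (L : X → ℝ)
    (hL_nonneg : ∀ x ∈ 𝒳, 0 ≤ L x)
    (hL_add : ∀ x ∈ 𝒳, ∀ y ∈ 𝒳, L (x + y) ≤ L x + L y)
    (hL_smul : ∀ (c : ℂ), ∀ x ∈ 𝒳, L (c • x) = ‖c‖ * L x)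
    -- `L₀` a slip-norm on `𝒜₀`
    (L₀ : A₀ → ℝ)
    (hL₀_nonneg : ∀ a ∈ 𝒜₀, 0 ≤ L₀ a)
    (hL₀_add : ∀ a ∈ 𝒜₀, ∀ b ∈ 𝒜₀, L₀ (a + b) ≤ L₀ a + L₀ b)
    (hL₀_smul : ∀ (c : ℂ), ∀ a ∈ 𝒜₀, L₀ (c • a) = ‖c‖ * L₀ a)
    (hL₀_one : L₀ 1 = 0)
    (hL₀_star : ∀ a ∈ 𝒜₀, L₀ (star a) = L₀ a)
    -- `(𝒜₀, L₀)` is a compact quantum metric space (Rieffel's criterion)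
    (hcqms : TotallyBounded
      (⇑(Submodule.span ℂ ({1} : Set A₀)).mkQ '' {a : A₀ | a ∈ 𝒜₀ ∧ L₀ a ≤ 1}))
    -- `𝒳` has a finite frame `ζ_1, …, ζ_n`
    (n : ℕ) (ζ : Fin n → X) (hζ : ∀ j, ζ j ∈ 𝒳)
    (h_frame : ∀ x ∈ 𝒳, ∑ j, sm (ζ j) (inn (ζ j) x) = x)
    -- (1) `‖x‖ ≤ C·L(x)` on `𝒳`
    (C : ℝ) (hC : 0 ≤ C) (h1 : ∀ x ∈ 𝒳, ‖x‖ ≤ C * L x)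
    -- (2) `L₀(⟨ζ_j, x⟩) ≤ C₀·(L(x) + ‖x‖)` on `𝒳`
    (C₀ : ℝ) (hC₀ : 0 ≤ C₀)
    (h2 : ∀ x ∈ 𝒳, ∀ j : Fin n, L₀ (inn (ζ j) x) ≤ C₀ * (L x + ‖x‖)) :
    TotallyBounded {x : X | x ∈ 𝒳 ∧ L x ≤ 1} := by
  classical
  -- A C*-algebra instance for access to order/norm lemmas
  letI : CStarAlgebra A₀ :=
    { ‹NormedRing A₀›, ‹StarRing A₀›, ‹CStarRing A₀›, ‹NormedAlgebra ℂ A₀›,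
      ‹StarModule ℂ A₀›, ‹CompleteSpace A₀› with }
  set K : ℝ := C₀ * (1 + C) with hK
  have hK0 : 0 ≤ K := by positivity
  set S₀ : Set A₀ := {a | a ∈ 𝒜₀ ∧ L₀ a ≤ K ∧ ‖a‖ ≤ C} with hS₀
  set N := Submodule.span ℂ ({1} : Set A₀) with hN
  -- Step 1 : the quotient image of S₀ is totally bounded
  have step1 : TotallyBounded (⇑N.mkQ '' S₀) := by
    have hsub : ⇑N.mkQ '' S₀ ⊆
        (fun q : A₀ ⧸ N => ((K + 1 : ℝ) : ℂ) • q) ''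
          (⇑N.mkQ '' {a : A₀ | a ∈ 𝒜₀ ∧ L₀ a ≤ 1}) := by
      rintro - ⟨a, ⟨haA, haL, -⟩, rfl⟩
      have hKne : ((K + 1 : ℝ) : ℂ) ≠ 0 := by
        simp only [ne_eq, Complex.ofReal_eq_zero]
        linarith
      refine ⟨N.mkQ ((((K + 1 : ℝ) : ℂ))⁻¹ • a), ⟨(((K + 1 : ℝ) : ℂ))⁻¹ • a,
        ⟨𝒜₀.smul_mem haA _, ?_⟩, rfl⟩, ?_⟩
      · rw [hL₀_smul _ a haA]
        have : ‖(((K + 1 : ℝ) : ℂ))⁻¹‖ = (K + 1)⁻¹ := by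
          rw [norm_inv, Complex.norm_real, Real.norm_of_nonneg (by linarith)]
        rw [this]
        have hpos : (0:ℝ) < K + 1 := by linarith
        rw [inv_mul_le_iff₀ hpos, mul_one]
        linarith
      · show ((K + 1 : ℝ) : ℂ) • N.mkQ ((((K + 1 : ℝ) : ℂ))⁻¹ • a) = N.mkQ a
        rw [← map_smul, smul_inv_smul₀ hKne]
    refine TotallyBounded.subset hsub (TotallyBounded.image hcqms ?_)
    exact uniformContinuous_const_smul _
  -- Step 2 : S₀ is totally bounded in A₀
  have step2 : TotallyBounded S₀ :=
    tb_of_quotient (M := C) (fun a ha => ha.2.2) step1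
  -- the norm bound for the module action
  have hsm_norm : ∀ (x : X) (a : A₀), ‖sm x a‖ ≤ ‖x‖ * ‖a‖ := by
    intro x a
    have key : inn (sm x a) (sm x a) = star a * inn x x * a := by
      have h1 : inn (sm x a) (sm x a) = inn (sm x a) x * a := h_inn_sm _ _ _
      have h2 : inn (sm x a) x = star (inn x (sm x a)) := (h_inn_star _ _).symm
      have h3 : inn x (sm x a) = inn x x * a := h_inn_sm _ _ _
      have h4 : star (inn x x) = inn x x := h_inn_star x x
      rw [h1, h2, h3, star_mul, h4]
    have hsq : ‖sm x a‖ ^ 2 ≤ (‖x‖ * ‖a‖) ^ 2 := by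
      rw [h_norm, key]
      calc ‖star a * inn x x * a‖ ≤ ‖star a * inn x x‖ * ‖a‖ := norm_mul_le _ _
        _ ≤ ‖star a‖ * ‖inn x x‖ * ‖a‖ :=
            mul_le_mul_of_nonneg_right (norm_mul_le _ _) (norm_nonneg _)
        _ = ‖a‖ * ‖x‖ ^ 2 * ‖a‖ := by rw [norm_star, h_norm]
        _ = (‖x‖ * ‖a‖) ^ 2 := by ring
    exact le_of_pow_le_pow_left₀ two_ne_zero (by positivity) hsq
  -- Step 3 : each image set is totally bounded
  have step3 : ∀ j : Fin n, TotallyBounded ((fun a : A₀ => sm (ζ j) a) '' S₀) := by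
    intro j
    refine step2.image ?_
    have φ : A₀ →+ X := AddMonoidHom.mk' (sm (ζ j)) (h_sm_addr (ζ j))
    refine (LipschitzWith.of_dist_le_mul (K := ‖ζ j‖₊) ?_).uniformContinuous
    intro a b
    have hsub : sm (ζ j) a - sm (ζ j) b = sm (ζ j) (a - b) :=
      (map_sub (AddMonoidHom.mk' (sm (ζ j)) (h_sm_addr (ζ j))) a b).symm
    rw [dist_eq_norm, dist_eq_norm, hsub]
    exact le_trans (hsm_norm _ _) (by rw [coe_nnnorm])
  -- Step 4 : the sum of the image sets is totally bounded
  have step4 : TotallyBounded (∑ j ∈ Finset.univ, (fun a : A₀ => sm (ζ j) a) '' S₀) :=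
    tb_finsetSum _ _ (fun j _ => step3 j)
  -- Step 5 : our set is contained in this sum
  refine TotallyBounded.subset ?_ step4
  intro x hx
  obtain ⟨hx𝒳, hxL⟩ := hx
  have hLx0 : 0 ≤ L x := hL_nonneg x hx𝒳
  have hxn : ‖x‖ ≤ C := by
    calc ‖x‖ ≤ C * L x := h1 x hx𝒳
      _ ≤ C * 1 := mul_le_mul_of_nonneg_left hxL hC
      _ = C := mul_one C
  -- the frame coefficients
  set a : Fin n → A₀ := fun j => inn (ζ j) x with ha
  have haA : ∀ j, a j ∈ 𝒜₀ := fun j => h𝒳inn _ (hζ j) _ hx𝒳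
  have haL : ∀ j, L₀ (a j) ≤ K := by
    intro j
    calc L₀ (a j) ≤ C₀ * (L x + ‖x‖) := h2 x hx𝒳 j
      _ ≤ C₀ * (1 + C) := mul_le_mul_of_nonneg_left (add_le_add hxL hxn) hC₀
  -- the sum of star (a j) * a j equals inn x x
  have hsum : ∑ j, star (a j) * a j = inn x x := by
    have h5 : ∀ j : Fin n, star (a j) * a j = inn x (sm (ζ j) (a j)) := by
      intro j
      have : star (a j) = inn x (ζ j) := by rw [ha]; exact h_inn_star _ _
      rw [this, ← h_inn_sm]
    rw [Finset.sum_congr rfl fun j _ => h5 j]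
    have := map_sum (AddMonoidHom.mk' (inn x) (h_inn_addr x)) (fun j => sm (ζ j) (a j))
      Finset.univ
    simp only [AddMonoidHom.mk'_apply] at this
    rw [← this, h_frame x hx𝒳]
  have han : ∀ j, ‖a j‖ ≤ C := by
    intro j
    have hle : star (a j) * a j ≤ inn x x := by
      rw [← hsum]
      exact Finset.single_le_sum (fun i _ => star_mul_self_nonneg (a i))
        (Finset.mem_univ j)
    have : ‖star (a j) * a j‖ ≤ ‖inn x x‖ :=
      CStarAlgebra.norm_le_norm_of_nonneg_of_le (star_mul_self_nonneg _) hle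
    rw [CStarRing.norm_star_mul_self, ← h_norm] at this
    have hsq : ‖a j‖ ^ 2 ≤ ‖x‖ ^ 2 := by rw [pow_two]; exact le_trans this (le_refl _)
    calc ‖a j‖ ≤ ‖x‖ := le_of_pow_le_pow_left₀ two_ne_zero (norm_nonneg x) hsq
      _ ≤ C := hxn
  -- membership in the set sum
  have hxeq : x = ∑ j, sm (ζ j) (a j) := (h_frame x hx𝒳).symm
  rw [hxeq]
  exact Set.finset_sum_mem_finset_sum Finset.univ _ (fun j => sm (ζ j) (a j))
    (fun j _ => ⟨a j, ⟨haA j, haL j, han j⟩, rfl⟩)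


end
end

section
/- Let A be a unital C*-algebra carrying a strongly continuous circle action σ and let 𝒜 ⊆ A be a norm-dense unital *-subalgebra such that P_0(𝒜) ⊆ 𝒜 and such that there exist finitely many elements ζ_1^R,…,ζ_k^R ∈ 𝒜 ∩ A_1 and ζ_1^L,…,ζ_m^L ∈ 𝒜 ∩ A_1 with ∑_{j=1}^k ζ_j^R (ζ_j^R)* = 1 = ∑_{j=1}^m (ζ_j^L)* ζ_j^L. Then for every n ∈ ℤ: P_n(𝒜) = 𝒜 ∩ A_n; there exist finitely many elements ζ_{(n,1)},…,ζ_{(n,m_n)} ∈ 𝒜 ∩ A_n such that ∑_{j=1}^{m_n} ζ_{(n,j)} ζ_{(n,j)}* = 1 (so that x = ∑_{j=1}^{m_n} ζ_{(n,j)} ζ_{(n,j)}* x for every x ∈ 𝒜 ∩ A_n, i.e. 𝒜 ∩ A_n has a finite frame); and 𝒜 ∩ A_n is norm-dense in A_n. -/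
/-!
Statement 2: For a strongly continuous circle action on a unital C*-algebra `A` and a
norm-dense unital *-subalgebra `𝒜` with `P_0(𝒜) ⊆ 𝒜` which admits the two finite
families in `𝒜 ∩ A_1` summing to `1`, it holds for every `n ∈ ℤ` that
`P_n(𝒜) = 𝒜 ∩ A_n`, that `𝒜 ∩ A_n` admits a finite frame
`∑_j ζ_{(n,j)} ζ_{(n,j)}* = 1` with `ζ_{(n,j)} ∈ 𝒜 ∩ A_n`, and that `𝒜 ∩ A_n` is
norm-dense in `A_n`.
-/

set_option maxHeartbeats 1000000

noncomputable section

open scoped Real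

/-- A strongly continuous action of the circle group on a unital C*-algebra by
*-automorphisms. -/
structure CircleAction (A : Type*) [NormedRing A] [StarRing A] [NormedAlgebra ℂ A] where
  σ : Circle → A → A
  map_one_apply : ∀ a : A, σ 1 a = a
  map_mul_apply : ∀ g h : Circle, ∀ a : A, σ (g * h) a = σ g (σ h a)
  map_add : ∀ g : Circle, ∀ a b : A, σ g (a + b) = σ g a + σ g b
  map_smul : ∀ g : Circle, ∀ (c : ℂ) (a : A), σ g (c • a) = c • σ g a
  map_mul : ∀ g : Circle, ∀ a b : A, σ g (a * b) = σ g a * σ g b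
  map_star : ∀ g : Circle, ∀ a : A, σ g (star a) = star (σ g a)
  map_unit : ∀ g : Circle, σ g 1 = 1
  strong_continuity : ∀ a : A, Continuous fun g : Circle => σ g a

variable {A : Type*} [NormedRing A] [StarRing A] [CStarRing A] [NormedAlgebra ℂ A]
  [StarModule ℂ A] [CompleteSpace A]

/-- The spectral subspace `A_n = {a ∈ A ∣ σ_λ(a) = λ^n a}`. -/
def specSub (S : CircleAction A) (n : ℤ) : Set A :=
  {a : A | ∀ lam : Circle, S.σ lam a = ((lam : ℂ) ^ n) • a}

/-- The spectral projection `P_n(a) = (1/2π) ∫_0^{2π} e^{-int} σ_{e^{it}}(a) dt`. -/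
def specProj (S : CircleAction A) (n : ℤ) (a : A) : A :=
  (((2 * π)⁻¹ : ℝ) : ℂ) •
    ∫ t in (0 : ℝ)..(2 * π), Complex.exp (-(n : ℂ) * t * Complex.I) • S.σ (Circle.exp t) a

namespace CircleAction
variable (S : CircleAction A)

noncomputable def equiv (g : Circle) : A ≃⋆ₐ[ℂ] A where
  toFun := S.σ g
  invFun := S.σ g⁻¹
  left_inv a := by rw [← S.map_mul_apply, inv_mul_cancel, S.map_one_apply]
  right_inv a := by rw [← S.map_mul_apply, mul_inv_cancel, S.map_one_apply]
  map_add' := S.map_add g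
  map_mul' := S.map_mul g
  map_smul' := S.map_smul g
  map_star' := S.map_star g

lemma norm_sigma (g : Circle) (a : A) : ‖S.σ g a‖ = ‖a‖ := by
  letI : CStarAlgebra A := { }
  exact StarAlgEquiv.norm_map (S.equiv g) a

noncomputable def clm (g : Circle) : A →L[ℂ] A :=
  LinearMap.mkContinuous
    { toFun := S.σ g, map_add' := S.map_add g, map_smul' := S.map_smul g } 1
    (fun a => by rw [one_mul]; exact le_of_eq (by simpa using S.norm_sigma g a))

@[simp] lemma clm_apply (g : Circle) (a : A) : S.clm g a = S.σ g a := rfl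

lemma cont_integrand (n : ℤ) (a : A) :
    Continuous fun t : ℝ => Complex.exp (-(n : ℂ) * t * Complex.I) • S.σ (Circle.exp t) a := by
  apply Continuous.smul
  · exact Complex.continuous_exp.comp
      (((continuous_const.mul Complex.continuous_ofReal).mul continuous_const))
  · exact (S.strong_continuity a).comp Circle.exp.continuous

lemma integrable (n : ℤ) (a : A) :
    IntervalIntegrable
      (fun t : ℝ => Complex.exp (-(n : ℂ) * t * Complex.I) • S.σ (Circle.exp t) a)
      MeasureTheory.volume 0 (2 * π) :=
  (S.cont_integrand n a).intervalIntegrable 0 (2 * π)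

lemma sigma_zero (g : Circle) : S.σ g 0 = 0 := by
  have := S.map_smul g 0 0; simpa using this

lemma sigma_sub (g : Circle) (a b : A) : S.σ g (a - b) = S.σ g a - S.σ g b := by
  have : a - b = a + (-1 : ℂ) • b := by simp [sub_eq_add_neg]
  rw [this, S.map_add, S.map_smul]; simp [sub_eq_add_neg]

lemma specProj_add (n : ℤ) (a b : A) :
    specProj S n (a + b) = specProj S n a + specProj S n b := by
  unfold specProj
  rw [← smul_add, ← intervalIntegral.integral_add (S.integrable n a) (S.integrable n b)]
  congr 1
  apply intervalIntegral.integral_congr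
  intro t _
  simp only [S.map_add, smul_add]

lemma specProj_sub (n : ℤ) (a b : A) :
    specProj S n (a - b) = specProj S n a - specProj S n b := by
  unfold specProj
  rw [← smul_sub, ← intervalIntegral.integral_sub (S.integrable n a) (S.integrable n b)]
  congr 1
  apply intervalIntegral.integral_congr
  intro t _
  simp only [S.sigma_sub, smul_sub]

lemma specProj_zero (n : ℤ) : specProj S n (0 : A) = 0 := by
  unfold specProj
  simp [S.sigma_zero]

lemma specProj_sum {ι : Type*} (s : Finset ι) (f : ι → A) (n : ℤ) :
    specProj S n (∑ i ∈ s, f i) = ∑ i ∈ s, specProj S n (f i) := by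
  classical
  induction s using Finset.induction with
  | empty => simp [S.specProj_zero]
  | insert _ _ h ih => rw [Finset.sum_insert h, S.specProj_add, ih, Finset.sum_insert h]

lemma specProj_of_mem {n : ℤ} {x : A} (hx : x ∈ specSub S n) : specProj S n x = x := by
  unfold specProj
  have h1 : ∀ t : ℝ, Complex.exp (-(n : ℂ) * t * Complex.I) • S.σ (Circle.exp t) x = x := by
    intro t
    rw [hx (Circle.exp t), smul_smul, Circle.coe_exp, ← Complex.exp_int_mul, ← Complex.exp_add]
    have : -(n : ℂ) * t * Complex.I + n * (t * Complex.I) = 0 := by ring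
    rw [this, Complex.exp_zero, one_smul]
  rw [intervalIntegral.integral_congr (g := fun _ => x) (fun t _ => h1 t)]
  rw [intervalIntegral.integral_const, sub_zero, ← Complex.coe_smul, smul_smul]
  have h2 : ((((2 * π)⁻¹ : ℝ) : ℂ) * (((2 * π) : ℝ) : ℂ)) = 1 := by
    rw [← Complex.ofReal_mul, inv_mul_cancel₀ (by positivity : (2 * π : ℝ) ≠ 0),
      Complex.ofReal_one]
  rw [h2, one_smul]

lemma specProj_mul_left {n : ℤ} {z : A} (hz : z ∈ specSub S n) (b : A) :
    specProj S n (z * b) = z * specProj S 0 b := by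
  unfold specProj
  have h1 : ∀ t : ℝ, Complex.exp (-(n : ℂ) * t * Complex.I) • S.σ (Circle.exp t) (z * b)
      = z * S.σ (Circle.exp t) b := by
    intro t
    rw [S.map_mul, hz (Circle.exp t), smul_mul_assoc, smul_smul, Circle.coe_exp,
      ← Complex.exp_int_mul, ← Complex.exp_add]
    have : -(n : ℂ) * t * Complex.I + n * (t * Complex.I) = 0 := by ring
    rw [this, Complex.exp_zero, one_smul]
  rw [intervalIntegral.integral_congr (fun t _ => h1 t)]
  have h2 : (fun t : ℝ => Complex.exp (-(0 : ℤ) * t * Complex.I) • S.σ (Circle.exp t) b)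
      = fun t : ℝ => S.σ (Circle.exp t) b := by
    funext t; simp
  rw [h2]
  have hint : IntervalIntegrable (fun t : ℝ => S.σ (Circle.exp t) b)
      MeasureTheory.volume 0 (2 * π) :=
    (((S.strong_continuity b).comp Circle.exp.continuous)).intervalIntegrable 0 (2 * π)
  have := (ContinuousLinearMap.mul ℂ A z).intervalIntegral_comp_comm hint
  simp only [ContinuousLinearMap.mul_apply'] at this
  rw [mul_smul_comm, this]

lemma specProj_mem (n : ℤ) (a : A) : specProj S n a ∈ specSub S n := by
  intro lam
  obtain ⟨s, rfl⟩ : ∃ s : ℝ, Circle.exp s = lam := ⟨Complex.arg lam, Circle.exp_arg lam⟩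
  unfold specProj
  rw [S.map_smul]
  rw [← S.clm_apply, (S.clm (Circle.exp s)).intervalIntegral_comp_comm (S.integrable n a) |>.symm]
  set g : ℝ → A := fun u =>
    Complex.exp (-(n : ℂ) * (u - s) * Complex.I) • S.σ (Circle.exp u) a with hg_def
  have hstep : ∀ t : ℝ, S.clm (Circle.exp s)
      (Complex.exp (-(n : ℂ) * t * Complex.I) • S.σ (Circle.exp t) a) = g (s + t) := by
    intro t
    show _ = Complex.exp (-(n : ℂ) * (((s + t : ℝ) : ℂ) - (s : ℝ)) * Complex.I) •
      S.σ (Circle.exp (s + t)) a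
    have hc : ((s + t : ℝ) : ℂ) - (s : ℝ) = ((t : ℝ) : ℂ) := by push_cast; ring
    rw [hc, clm_apply, S.map_smul, ← S.map_mul_apply, ← Circle.exp_add]
  rw [intervalIntegral.integral_congr (fun t _ => hstep t)]
  rw [intervalIntegral.integral_comp_add_left g s]
  have hper : Function.Periodic g (2 * π) := by
    intro u
    simp only [hg_def]
    rw [Circle.exp_add_two_pi]
    rw [show -(n : ℂ) * (↑(u + 2 * π) - s) * Complex.I
        = -(n : ℂ) * (u - s) * Complex.I + (-n : ℤ) * (2 * π * Complex.I) by push_cast; ring,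
      Complex.exp_add, Complex.exp_int_mul_two_pi_mul_I, mul_one]
  have heq := hper.intervalIntegral_add_eq s 0
  simp only [add_zero, zero_add] at heq ⊢
  rw [heq]
  have hsplit : ∀ u : ℝ, g u = Complex.exp ((n : ℂ) * s * Complex.I) •
      (Complex.exp (-(n : ℂ) * u * Complex.I) • S.σ (Circle.exp u) a) := by
    intro u
    have hsc : (-(n : ℂ) * (u - s) * Complex.I)
        = ((n : ℂ) * s * Complex.I) + (-(n : ℂ) * u * Complex.I) := by ring
    simp only [hg_def]
    rw [hsc, Complex.exp_add, mul_smul]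
  rw [intervalIntegral.integral_congr (fun u _ => hsplit u), intervalIntegral.integral_smul]
  have hsc2 : (Circle.exp s : ℂ) ^ n = Complex.exp ((n : ℂ) * s * Complex.I) := by
    rw [Circle.coe_exp, ← Complex.exp_int_mul]
    congr 1
    ring
  rw [hsc2, smul_comm]

lemma norm_specProj_le (n : ℤ) (b : A) : ‖specProj S n b‖ ≤ ‖b‖ := by
  unfold specProj
  have hbound : ∀ t ∈ Set.uIoc (0 : ℝ) (2 * π),
      ‖Complex.exp (-(n : ℂ) * t * Complex.I) • S.σ (Circle.exp t) b‖ ≤ ‖b‖ := by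
    intro t _
    rw [norm_smul, S.norm_sigma]
    have : ‖Complex.exp (-(n : ℂ) * t * Complex.I)‖ = 1 := by
      rw [Complex.norm_exp]
      have : (-(n : ℂ) * t * Complex.I).re = 0 := by simp
      rw [this, Real.exp_zero]
    rw [this, one_mul]
  have h2 := intervalIntegral.norm_integral_le_of_norm_le_const hbound
  rw [norm_smul]
  have hnc : ‖(((2 * π)⁻¹ : ℝ) : ℂ)‖ = (2 * π)⁻¹ := by
    rw [Complex.norm_real, Real.norm_eq_abs, abs_of_pos (by positivity)]
  rw [hnc]
  calc (2 * π)⁻¹ * ‖∫ t in (0:ℝ)..(2*π), Complex.exp (-(n : ℂ) * t * Complex.I) •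
        S.σ (Circle.exp t) b‖
      ≤ (2 * π)⁻¹ * (‖b‖ * |2 * π - 0|) := by
        apply mul_le_mul_of_nonneg_left h2 (by positivity)
    _ = ‖b‖ := by
        rw [sub_zero, abs_of_pos (by positivity)]
        field_simp


lemma one_mem_specSub : (1 : A) ∈ specSub S 0 := by
  intro lam
  rw [S.map_unit, zpow_zero, one_smul]

lemma specSub_mul {p q : ℤ} {a b : A} (ha : a ∈ specSub S p) (hb : b ∈ specSub S q) :
    a * b ∈ specSub S (p + q) := by
  intro lam
  rw [S.map_mul, ha lam, hb lam, smul_mul_assoc, mul_smul_comm, smul_smul,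
    zpow_add₀ (Circle.coe_ne_zero lam)]

lemma specSub_star {p : ℤ} {a : A} (ha : a ∈ specSub S p) : star a ∈ specSub S (-p) := by
  intro lam
  rw [S.map_star, ha lam, star_smul]
  congr 1
  rw [star_zpow₀]
  have h1 : star (lam : ℂ) = (lam : ℂ)⁻¹ := by
    rw [Complex.star_def, ← Circle.coe_inv_eq_conj, Circle.coe_inv]
  rw [h1, inv_zpow, ← zpow_neg]

end CircleAction

section Frames

variable (S : CircleAction A) (𝒜 : StarSubalgebra ℂ A)

lemma frameR_aux
    (hframeR : ∃ (k : ℕ) (ζR : Fin k → A),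
      (∀ j, ζR j ∈ 𝒜 ∧ ζR j ∈ specSub S 1) ∧ ∑ j, ζR j * star (ζR j) = 1)
    (p : ℕ) :
    ∃ (mn : ℕ) (ζ : Fin mn → A),
      (∀ j, ζ j ∈ 𝒜 ∧ ζ j ∈ specSub S p) ∧ ∑ j, ζ j * star (ζ j) = 1 := by
  obtain ⟨k, ζR, hζR, hsumR⟩ := hframeR
  induction p with
  | zero =>
    exact ⟨1, fun _ => 1, fun j => ⟨one_mem _, by simpa using S.one_mem_specSub⟩, by simp⟩
  | succ p ih =>
    obtain ⟨mp, ζ, hζ, hsum⟩ := ih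
    refine ⟨k * mp, (fun x => ζR ((finProdFinEquiv.symm x).1) * ζ ((finProdFinEquiv.symm x).2)),
      ?_, ?_⟩
    · intro x
      refine ⟨mul_mem (hζR _).1 (hζ _).1, ?_⟩
      have := S.specSub_mul (hζR ((finProdFinEquiv.symm x).1)).2 (hζ ((finProdFinEquiv.symm x).2)).2
      convert this using 2 <;> omega
    · rw [← Equiv.sum_comp finProdFinEquiv
        (fun x => (ζR ((finProdFinEquiv.symm x).1) * ζ ((finProdFinEquiv.symm x).2)) *
          star (ζR ((finProdFinEquiv.symm x).1) * ζ ((finProdFinEquiv.symm x).2)))]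
      simp only [Equiv.symm_apply_apply]
      rw [Fintype.sum_prod_type]
      have hinner : ∀ j : Fin k,
          ∑ i : Fin mp, (ζR j * ζ i) * star (ζR j * ζ i) = ζR j * star (ζR j) := by
        intro j
        have hterm : ∀ i : Fin mp, (ζR j * ζ i) * star (ζR j * ζ i)
            = ζR j * ((ζ i * star (ζ i)) * star (ζR j)) := by
          intro i
          rw [star_mul, mul_assoc, ← mul_assoc (ζ i)]
        simp_rw [hterm]
        rw [← Finset.mul_sum, ← Finset.sum_mul, hsum, one_mul]
      simp_rw [hinner]
      exact hsumR

lemma frameL_aux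
    (hframeL : ∃ (m : ℕ) (ζL : Fin m → A),
      (∀ j, ζL j ∈ 𝒜 ∧ ζL j ∈ specSub S 1) ∧ ∑ j, star (ζL j) * ζL j = 1)
    (p : ℕ) :
    ∃ (mn : ℕ) (ζ : Fin mn → A),
      (∀ j, ζ j ∈ 𝒜 ∧ ζ j ∈ specSub S p) ∧ ∑ j, star (ζ j) * ζ j = 1 := by
  obtain ⟨k, ζL, hζL, hsumL⟩ := hframeL
  induction p with
  | zero =>
    exact ⟨1, fun _ => 1, fun j => ⟨one_mem _, by simpa using S.one_mem_specSub⟩, by simp⟩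
  | succ p ih =>
    obtain ⟨mp, ζ, hζ, hsum⟩ := ih
    refine ⟨k * mp, (fun x => ζ ((finProdFinEquiv.symm x).2) * ζL ((finProdFinEquiv.symm x).1)),
      ?_, ?_⟩
    · intro x
      refine ⟨mul_mem (hζ _).1 (hζL _).1, ?_⟩
      have := S.specSub_mul (hζ ((finProdFinEquiv.symm x).2)).2 (hζL ((finProdFinEquiv.symm x).1)).2
      convert this using 2 <;> omega
    · rw [← Equiv.sum_comp finProdFinEquiv
        (fun x => star (ζ ((finProdFinEquiv.symm x).2) * ζL ((finProdFinEquiv.symm x).1)) *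
          (ζ ((finProdFinEquiv.symm x).2) * ζL ((finProdFinEquiv.symm x).1)))]
      simp only [Equiv.symm_apply_apply]
      rw [Fintype.sum_prod_type]
      have hinner : ∀ j : Fin k,
          ∑ i : Fin mp, star (ζ i * ζL j) * (ζ i * ζL j) = star (ζL j) * ζL j := by
        intro j
        have hterm : ∀ i : Fin mp, star (ζ i * ζL j) * (ζ i * ζL j)
            = star (ζL j) * ((star (ζ i) * ζ i) * ζL j) := by
          intro i
          rw [star_mul, mul_assoc, ← mul_assoc (star (ζ i))]
        simp_rw [hterm]
        rw [← Finset.mul_sum, ← Finset.sum_mul, hsum, one_mul]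
      simp_rw [hinner]
      exact hsumL

lemma frame_n
    (hframeR : ∃ (k : ℕ) (ζR : Fin k → A),
      (∀ j, ζR j ∈ 𝒜 ∧ ζR j ∈ specSub S 1) ∧ ∑ j, ζR j * star (ζR j) = 1)
    (hframeL : ∃ (m : ℕ) (ζL : Fin m → A),
      (∀ j, ζL j ∈ 𝒜 ∧ ζL j ∈ specSub S 1) ∧ ∑ j, star (ζL j) * ζL j = 1)
    (n : ℤ) :
    ∃ (mn : ℕ) (ζ : Fin mn → A),
      (∀ j, ζ j ∈ 𝒜 ∧ ζ j ∈ specSub S n) ∧ ∑ j, ζ j * star (ζ j) = 1 := by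
  rcases le_or_gt 0 n with hn | hn
  · obtain ⟨mn, ζ, hζ, hsum⟩ := frameR_aux S 𝒜 hframeR n.toNat
    refine ⟨mn, ζ, fun j => ⟨(hζ j).1, ?_⟩, hsum⟩
    have : ((n.toNat : ℤ)) = n := Int.toNat_of_nonneg hn
    rw [← this]
    exact (hζ j).2
  · obtain ⟨mn, w, hw, hsum⟩ := frameL_aux S 𝒜 hframeL (-n).toNat
    refine ⟨mn, fun j => star (w j), fun j => ⟨star_mem (hw j).1, ?_⟩, ?_⟩
    · have h1 := S.specSub_star (hw j).2
      have h2 : (-(((-n).toNat : ℕ) : ℤ)) = n := by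
        rw [Int.toNat_of_nonneg (by omega : (0:ℤ) ≤ -n)]; ring
      rwa [h2] at h1
    · simp_rw [star_star]
      exact hsum

end Frames


theorem spectral_subspaces_have_frames
    (S : CircleAction A) (𝒜 : StarSubalgebra ℂ A) (hdense : Dense (𝒜 : Set A))
    (hP0 : ∀ a ∈ 𝒜, specProj S 0 a ∈ 𝒜)
    (hframeR : ∃ (k : ℕ) (ζR : Fin k → A),
      (∀ j, ζR j ∈ 𝒜 ∧ ζR j ∈ specSub S 1) ∧ ∑ j, ζR j * star (ζR j) = 1)
    (hframeL : ∃ (m : ℕ) (ζL : Fin m → A),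
      (∀ j, ζL j ∈ 𝒜 ∧ ζL j ∈ specSub S 1) ∧ ∑ j, star (ζL j) * ζL j = 1)
    (n : ℤ) :
    specProj S n '' (𝒜 : Set A) = (𝒜 : Set A) ∩ specSub S n ∧
    (∃ (mn : ℕ) (ζ : Fin mn → A),
      (∀ j, ζ j ∈ 𝒜 ∧ ζ j ∈ specSub S n) ∧ ∑ j, ζ j * star (ζ j) = 1) ∧
    specSub S n ⊆ closure ((𝒜 : Set A) ∩ specSub S n) := by

  obtain ⟨mn, ζ, hζ, hsum⟩ := frame_n S 𝒜 hframeR hframeL n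
  have himg : specProj S n '' (𝒜 : Set A) = (𝒜 : Set A) ∩ specSub S n := by
    apply Set.Subset.antisymm
    · rintro _ ⟨a, ha, rfl⟩
      refine ⟨?_, S.specProj_mem n a⟩
      have hdecomp : a = ∑ j, ζ j * (star (ζ j) * a) := by
        simp_rw [← mul_assoc]
        rw [← Finset.sum_mul, hsum, one_mul]
      rw [hdecomp, S.specProj_sum]
      apply sum_mem
      intro j _
      rw [S.specProj_mul_left (hζ j).2]
      exact mul_mem (hζ j).1 (hP0 _ (mul_mem (star_mem (hζ j).1) ha))
    · rintro x ⟨hx𝒜, hxn⟩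
      exact ⟨x, hx𝒜, S.specProj_of_mem hxn⟩
  refine ⟨himg, ⟨mn, ζ, hζ, hsum⟩, ?_⟩
  intro x hx
  rw [Metric.mem_closure_iff]
  intro ε hε
  obtain ⟨a, ha𝒜, hdist⟩ : ∃ a ∈ (𝒜 : Set A), dist a x < ε := by
    obtain ⟨a, ha1, ha2⟩ := Metric.dense_iff.mp hdense x ε hε
    exact ⟨a, ha2, Metric.mem_ball.mp ha1⟩
  refine ⟨specProj S n a, ?_, ?_⟩
  · rw [← himg]; exact ⟨a, ha𝒜, rfl⟩
  · have h1 : dist x (specProj S n a) = ‖specProj S n (x - a)‖ := by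
      rw [S.specProj_sub, S.specProj_of_mem hx, dist_eq_norm]
    rw [h1]
    calc ‖specProj S n (x - a)‖ ≤ ‖x - a‖ := S.norm_specProj_le n _
      _ < ε := by rwa [← dist_eq_norm, dist_comm]


end
end

section
/- Let A be a unital C*-algebra carrying a strongly continuous circle action σ, let 𝒜 ⊆ A be a norm-dense unital *-subalgebra, let B be a unital C*-algebra and let β_i : 𝒜 → B be a unital ℂ-algebra homomorphism; set β_{-i}(a) := (β_i(a*))*. Let L_β : 𝒜 → [0,∞) be a slip-norm. Suppose: P_0(𝒜) ⊆ 𝒜 and there exist finitely many elements ζ_1^R,…,ζ_k^R ∈ 𝒜 ∩ A_1 and ζ_1^L,…,ζ_m^L ∈ 𝒜 ∩ A_1 with ∑_{j=1}^k ζ_j^R (ζ_j^R)* = 1 = ∑_{j=1}^m (ζ_j^L)* ζ_j^L; L_β satisfies the twisted Leibniz inequality L_β(ab) ≤ L_β(a)·‖β_i(b)‖ + ‖β_{-i}(a)‖·L_β(b) for all a, b ∈ 𝒜; and the restriction of β_i to 𝒜 ∩ A_0 extends to a unital *-homomorphism A_0 → B. Then for every n ∈ ℤ and every y ∈ 𝒜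 ∩ A_n there exists a constant C_y ≥ 0 such that L_β(y* x) ≤ C_y·(L_β(x) + ‖x‖) for all x ∈ 𝒜 ∩ A_n. -/
/-!
Statement 3: Under the frame assumptions on `𝒜 ∩ A_1`, a slip-norm `L_β` satisfying the
twisted Leibniz inequality (with respect to a unital algebra homomorphism `β_i : 𝒜 → B`
whose restriction to `𝒜 ∩ A_0` extends to a unital *-homomorphism `A_0 → B`) satisfies:
for every `n ∈ ℤ` and `y ∈ 𝒜 ∩ A_n` there is `C_y ≥ 0` with
`L_β(y* x) ≤ C_y (L_β(x) + ‖x‖)` for all `x ∈ 𝒜 ∩ A_n`.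
-/

noncomputable section

open scoped Real

variable {A : Type*} [NormedRing A] [StarRing A] [CStarRing A] [NormedAlgebra ℂ A]
  [StarModule ℂ A] [CompleteSpace A]

set_option linter.unusedSectionVars false

section Aux

variable (S : CircleAction A)

lemma CircleAction.sigma_zero_s3 (lam : Circle) : S.σ lam 0 = 0 := by
  have := S.map_smul lam 0 0
  simpa using this

lemma CircleAction.sigma_sub_s3 (lam : Circle) (a b : A) :
    S.σ lam (a - b) = S.σ lam a - S.σ lam b := by
  have h1 : a - b = a + (-1 : ℂ) • b := by simp [sub_eq_add_neg]
  rw [h1, S.map_add, S.map_smul]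
  simp [sub_eq_add_neg]

lemma CircleAction.sigma_norm_le (lam : Circle) (a : A) : ‖S.σ lam a‖ ≤ ‖a‖ := by
  letI cA : CStarAlgebra A :=
    { toNormedRing := ‹_›, toStarRing := ‹_›, toCompleteSpace := ‹_›,
      toCStarRing := ‹_›, toNormedAlgebra := ‹_›, toStarModule := ‹_› }
  let φ : A →⋆ₙₐ[ℂ] A :=
    { toFun := S.σ lam
      map_smul' := S.map_smul lam
      map_zero' := S.sigma_zero_s3 lam
      map_add' := S.map_add lam
      map_mul' := S.map_mul lam
      map_star' := S.map_star lam }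
  exact NonUnitalStarAlgHom.norm_apply_le φ a

lemma CircleAction.sigma_continuous (lam : Circle) : Continuous (S.σ lam) := by
  have : LipschitzWith 1 (S.σ lam) := by
    refine LipschitzWith.of_dist_le_mul fun a b => ?_
    rw [dist_eq_norm, dist_eq_norm, NNReal.coe_one, one_mul, ← S.sigma_sub_s3 lam]
    exact S.sigma_norm_le lam _
  exact this.continuous

lemma specSub_mul {p q : ℤ} {a b : A} (ha : a ∈ specSub S p) (hb : b ∈ specSub S q) :
    a * b ∈ specSub S (p + q) := by
  intro lam
  rw [S.map_mul, ha lam, hb lam, smul_mul_assoc, mul_smul_comm, smul_smul,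
    ← zpow_add₀ (Circle.coe_ne_zero lam)]

lemma specSub_star {p : ℤ} {a : A} (ha : a ∈ specSub S p) : star a ∈ specSub S (-p) := by
  intro lam
  rw [S.map_star, ha lam, star_smul]
  congr 1
  rw [star_zpow₀, Complex.star_def, ← Circle.coe_inv_eq_conj, Circle.coe_inv, inv_zpow,
    ← zpow_neg]

lemma specSub_smul {p : ℤ} (c : ℂ) {a : A} (ha : a ∈ specSub S p) :
    c • a ∈ specSub S p := fun lam => by
  rw [S.map_smul, ha lam, smul_comm]

lemma specSub_add {p : ℤ} {a b : A} (ha : a ∈ specSub S p) (hb : b ∈ specSub S p) :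
    a + b ∈ specSub S p := fun lam => by
  rw [S.map_add, ha lam, hb lam, smul_add]

lemma specSub_zero_mem {p : ℤ} : (0 : A) ∈ specSub S p := fun lam => by
  rw [S.sigma_zero_s3, smul_zero]

lemma specSub_one_mem : (1 : A) ∈ specSub S 0 := fun lam => by
  rw [S.map_unit, zpow_zero, one_smul]

end Aux

theorem twisted_Leibniz_frame_estimate
    (S : CircleAction A) (𝒜 : StarSubalgebra ℂ A) (hdense : Dense (𝒜 : Set A))
    {B : Type*} [NormedRing B] [StarRing B] [CStarRing B] [NormedAlgebra ℂ B]
    [StarModule ℂ B] [CompleteSpace B]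
    -- `β_i : 𝒜 → B` a unital ℂ-algebra homomorphism, `β_{-i}(a) := (β_i(a*))*`
    (βi : A → B)
    (hβi_one : βi 1 = 1)
    (hβi_add : ∀ a ∈ 𝒜, ∀ b ∈ 𝒜, βi (a + b) = βi a + βi b)
    (hβi_smul : ∀ (c : ℂ), ∀ a ∈ 𝒜, βi (c • a) = c • βi a)
    (hβi_mul : ∀ a ∈ 𝒜, ∀ b ∈ 𝒜, βi (a * b) = βi a * βi b)
    -- `L_β` is a slip-norm on `𝒜`
    (Lβ : A → ℝ)
    (hLβ_nonneg : ∀ a ∈ 𝒜, 0 ≤ Lβ a)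
    (hLβ_add : ∀ a ∈ 𝒜, ∀ b ∈ 𝒜, Lβ (a + b) ≤ Lβ a + Lβ b)
    (hLβ_smul : ∀ (c : ℂ), ∀ a ∈ 𝒜, Lβ (c • a) = ‖c‖ * Lβ a)
    (hLβ_one : Lβ 1 = 0)
    (hLβ_star : ∀ a ∈ 𝒜, Lβ (star a) = Lβ a)
    -- condition (2): `P_0(𝒜) ⊆ 𝒜` and the finite families in `𝒜 ∩ A_1`
    (hP0 : ∀ a ∈ 𝒜, specProj S 0 a ∈ 𝒜)
    (hframeR : ∃ (k : ℕ) (ζR : Fin k → A),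
      (∀ j, ζR j ∈ 𝒜 ∧ ζR j ∈ specSub S 1) ∧ ∑ j, ζR j * star (ζR j) = 1)
    (hframeL : ∃ (m : ℕ) (ζL : Fin m → A),
      (∀ j, ζL j ∈ 𝒜 ∧ ζL j ∈ specSub S 1) ∧ ∑ j, star (ζL j) * ζL j = 1)
    -- condition (4): twisted Leibniz inequality and the extension of `β_i` restricted
    -- to `𝒜 ∩ A_0` to a unital *-homomorphism `A_0 → B`
    (hLeibniz : ∀ a ∈ 𝒜, ∀ b ∈ 𝒜,
      Lβ (a * b) ≤ Lβ a * ‖βi b‖ + ‖star (βi (star a))‖ * Lβ b)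
    (hext : ∃ g : A → B,
      (∀ a ∈ (𝒜 : Set A) ∩ specSub S 0, g a = βi a) ∧
      g 1 = 1 ∧
      (∀ x ∈ specSub S 0, ∀ y ∈ specSub S 0, g (x + y) = g x + g y) ∧
      (∀ (c : ℂ), ∀ x ∈ specSub S 0, g (c • x) = c • g x) ∧
      (∀ x ∈ specSub S 0, ∀ y ∈ specSub S 0, g (x * y) = g x * g y) ∧
      (∀ x ∈ specSub S 0, g (star x) = star (g x))) :
    ∀ n : ℤ, ∀ y ∈ (𝒜 : Set A) ∩ specSub S n, ∃ Cy : ℝ, 0 ≤ Cy ∧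
      ∀ x ∈ (𝒜 : Set A) ∩ specSub S n, Lβ (star y * x) ≤ Cy * (Lβ x + ‖x‖) := by
  letI cA : CStarAlgebra A :=
    { toNormedRing := ‹_›, toStarRing := ‹_›, toCompleteSpace := ‹_›,
      toCStarRing := ‹_›, toNormedAlgebra := ‹_›, toStarModule := ‹_› }
  letI cB : CStarAlgebra B :=
    { toNormedRing := ‹_›, toStarRing := ‹_›, toCompleteSpace := ‹_›,
      toCStarRing := ‹_›, toNormedAlgebra := ‹_›, toStarModule := ‹_› }
  classical
  obtain ⟨g, hg_eq, hg_one, hg_add, hg_smul, hg_mul, hg_star⟩ := hext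
  obtain ⟨k, ζR, hζR, hsumR⟩ := hframeR
  obtain ⟨m, ζL, hζL, hsumL⟩ := hframeL
  -- the fixed point algebra as a closed star subalgebra
  let S0 : StarSubalgebra ℂ A :=
    { carrier := specSub S 0
      mul_mem' := fun {a b} ha hb => by simpa using specSub_mul S ha hb
      one_mem' := specSub_one_mem S
      add_mem' := fun {a b} ha hb => specSub_add S ha hb
      zero_mem' := specSub_zero_mem S
      algebraMap_mem' := fun c => by
        rw [Algebra.algebraMap_eq_smul_one]
        exact specSub_smul S c (specSub_one_mem S)
      star_mem' := fun {a} ha => by simpa using specSub_star S ha }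
  haveI hS0closed : IsClosed (S0 : Set A) := by
    have hset : (S0 : Set A) = ⋂ lam : Circle, {a : A | S.σ lam a = a} := by
      ext a
      simp only [Set.mem_iInter, Set.mem_setOf_eq]
      constructor
      · intro ha lam
        have := ha lam
        simpa using this
      · intro ha lam
        simpa using ha lam
    rw [hset]
    exact isClosed_iInter fun lam => isClosed_eq (S.sigma_continuous lam) continuous_id
  -- the extension as a (non-unital) star algebra homomorphism on `S0`
  let φ : S0 →⋆ₙₐ[ℂ] B :=
    { toFun := fun x => g (x : A)
      map_smul' := fun c x => hg_smul c x x.2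
      map_zero' := by
        have h0 : ((0 : ℂ) • (1 : A)) = (0 : A) := by simp
        have h1 := hg_smul 0 1 (specSub_one_mem S)
        rw [h0] at h1
        simpa using h1
      map_add' := fun x y => hg_add x x.2 y y.2
      map_mul' := fun x y => hg_mul x x.2 y y.2
      map_star' := fun x => hg_star x x.2 }
  -- the base estimate on the fixed point algebra
  have hbase : ∀ x ∈ (𝒜 : Set A) ∩ specSub S 0, ‖βi x‖ ≤ ‖x‖ := by
    rintro x ⟨hx1, hx2⟩
    have h1 : βi x = φ (⟨x, hx2⟩ : S0) := (hg_eq x ⟨hx1, hx2⟩).symm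
    rw [h1]
    exact NonUnitalStarAlgHom.norm_apply_le φ (⟨x, hx2⟩ : S0)
  -- `βi` of a finite sum of elements of `𝒜`
  have hβi_zero : βi 0 = 0 := by
    have := hβi_smul 0 1 (one_mem 𝒜)
    simpa using this
  have hβi_sum : ∀ (N : ℕ) (f : Fin N → A), (∀ j, f j ∈ 𝒜) →
      βi (∑ j, f j) = ∑ j, βi (f j) := by
    intro N
    induction N with
    | zero => intro f _; simpa using hβi_zero
    | succ N ih =>
      intro f hf
      rw [Fin.sum_univ_succ, Fin.sum_univ_succ,
        hβi_add _ (hf 0) _ (sum_mem fun j _ => hf _), ih _ (fun j => hf _)]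
  -- key norm estimate: on each spectral subspace, `βi` is bounded
  have hK : ∀ n : ℤ, ∃ K : ℝ, 0 ≤ K ∧
      ∀ x ∈ (𝒜 : Set A) ∩ specSub S n, ‖βi x‖ ≤ K * ‖x‖ := by
    intro n
    induction n using Int.induction_on with
    | zero => exact ⟨1, zero_le_one, fun x hx => by rw [one_mul]; exact hbase x hx⟩
    | succ n ih =>
      obtain ⟨K, hK0, hKb⟩ := ih
      refine ⟨(∑ j, ‖βi (ζR j)‖ * ‖ζR j‖) * K, by positivity, ?_⟩
      rintro x ⟨hx1, hx2⟩
      have hterm : ∀ j : Fin k, star (ζR j) * x ∈ (𝒜 : Set A) ∩ specSub S n := by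
        intro j
        refine ⟨mul_mem (star_mem (hζR j).1) hx1, ?_⟩
        have h := specSub_mul S (specSub_star S (hζR j).2) hx2
        have hn : (-(1 : ℤ)) + ((n : ℤ) + 1) = n := by ring
        rwa [hn] at h
      have hdecomp : x = ∑ j, ζR j * (star (ζR j) * x) := by
        have h1 : (∑ j, ζR j * star (ζR j)) * x = x := by rw [hsumR, one_mul]
        calc x = (∑ j, ζR j * star (ζR j)) * x := h1.symm
          _ = ∑ j, ζR j * (star (ζR j) * x) := by
              rw [Finset.sum_mul]
              exact Finset.sum_congr rfl fun j _ => mul_assoc _ _ _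
      have hβx : βi x = ∑ j, βi (ζR j) * βi (star (ζR j) * x) := by
        conv_lhs => rw [hdecomp]
        rw [hβi_sum k _ (fun j => mul_mem (hζR j).1 (hterm j).1)]
        exact Finset.sum_congr rfl fun j _ => hβi_mul _ (hζR j).1 _ (hterm j).1
      calc ‖βi x‖ ≤ ∑ j, ‖βi (ζR j) * βi (star (ζR j) * x)‖ := by
            rw [hβx]; exact norm_sum_le _ _
        _ ≤ ∑ j, ‖βi (ζR j)‖ * ‖ζR j‖ * (K * ‖x‖) := by
            refine Finset.sum_le_sum fun j _ => ?_
            have h1 := norm_mul_le (βi (ζR j)) (βi (star (ζR j) * x))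
            have h2 := hKb _ (hterm j)
            have h3 : ‖star (ζR j) * x‖ ≤ ‖ζR j‖ * ‖x‖ := by
              calc ‖star (ζR j) * x‖ ≤ ‖star (ζR j)‖ * ‖x‖ := norm_mul_le _ _
                _ = ‖ζR j‖ * ‖x‖ := by rw [norm_star]
            have h4 : (0 : ℝ) ≤ ‖βi (ζR j)‖ := norm_nonneg _
            calc ‖βi (ζR j) * βi (star (ζR j) * x)‖
                ≤ ‖βi (ζR j)‖ * ‖βi (star (ζR j) * x)‖ := h1
              _ ≤ ‖βi (ζR j)‖ * (K * ‖star (ζR j) * x‖) :=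
                  mul_le_mul_of_nonneg_left h2 h4
              _ ≤ ‖βi (ζR j)‖ * (K * (‖ζR j‖ * ‖x‖)) :=
                  mul_le_mul_of_nonneg_left (mul_le_mul_of_nonneg_left h3 hK0) h4
              _ = ‖βi (ζR j)‖ * ‖ζR j‖ * (K * ‖x‖) := by ring
        _ = (∑ j, ‖βi (ζR j)‖ * ‖ζR j‖) * K * ‖x‖ := by
            rw [← Finset.sum_mul]; ring
    | pred n ih =>
      obtain ⟨K, hK0, hKb⟩ := ih
      refine ⟨(∑ j, ‖βi (star (ζL j))‖ * ‖ζL j‖) * K, by positivity, ?_⟩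
      rintro x ⟨hx1, hx2⟩
      have hterm : ∀ j : Fin m, ζL j * x ∈ (𝒜 : Set A) ∩ specSub S (-(n : ℤ)) := by
        intro j
        refine ⟨mul_mem (hζL j).1 hx1, ?_⟩
        have h := specSub_mul S (hζL j).2 hx2
        have hn' : (1 : ℤ) + (-(n : ℤ) - 1) = -(n : ℤ) := by ring
        rwa [hn'] at h
      have hdecomp : x = ∑ j, star (ζL j) * (ζL j * x) := by
        have h1 : (∑ j, star (ζL j) * ζL j) * x = x := by rw [hsumL, one_mul]
        calc x = (∑ j, star (ζL j) * ζL j) * x := h1.symm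
          _ = ∑ j, star (ζL j) * (ζL j * x) := by
              rw [Finset.sum_mul]
              exact Finset.sum_congr rfl fun j _ => mul_assoc _ _ _
      have hβx : βi x = ∑ j, βi (star (ζL j)) * βi (ζL j * x) := by
        conv_lhs => rw [hdecomp]
        rw [hβi_sum m _ (fun j => mul_mem (star_mem (hζL j).1) (hterm j).1)]
        exact Finset.sum_congr rfl fun j _ =>
          hβi_mul _ (star_mem (hζL j).1) _ (hterm j).1
      calc ‖βi x‖ ≤ ∑ j, ‖βi (star (ζL j)) * βi (ζL j * x)‖ := by
            rw [hβx]; exact norm_sum_le _ _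
        _ ≤ ∑ j, ‖βi (star (ζL j))‖ * ‖ζL j‖ * (K * ‖x‖) := by
            refine Finset.sum_le_sum fun j _ => ?_
            have h1 := norm_mul_le (βi (star (ζL j))) (βi (ζL j * x))
            have h2 := hKb _ (hterm j)
            have h3 : ‖ζL j * x‖ ≤ ‖ζL j‖ * ‖x‖ := norm_mul_le _ _
            have h4 : (0 : ℝ) ≤ ‖βi (star (ζL j))‖ := norm_nonneg _
            calc ‖βi (star (ζL j)) * βi (ζL j * x)‖
                ≤ ‖βi (star (ζL j))‖ * ‖βi (ζL j * x)‖ := h1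
              _ ≤ ‖βi (star (ζL j))‖ * (K * ‖ζL j * x‖) :=
                  mul_le_mul_of_nonneg_left h2 h4
              _ ≤ ‖βi (star (ζL j))‖ * (K * (‖ζL j‖ * ‖x‖)) :=
                  mul_le_mul_of_nonneg_left (mul_le_mul_of_nonneg_left h3 hK0) h4
              _ = ‖βi (star (ζL j))‖ * ‖ζL j‖ * (K * ‖x‖) := by ring
        _ = (∑ j, ‖βi (star (ζL j))‖ * ‖ζL j‖) * K * ‖x‖ := by
            rw [← Finset.sum_mul]; ring
  -- conclusion
  intro n y hy
  obtain ⟨K, hK0, hKb⟩ := hK n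
  refine ⟨Lβ (star y) * K + ‖βi y‖, ?_, ?_⟩
  · exact add_nonneg (mul_nonneg (hLβ_nonneg (star y) (star_mem hy.1)) hK0)
      (norm_nonneg _)
  rintro x ⟨hx1, hx2⟩
  have hL := hLeibniz (star y) (star_mem hy.1) x hx1
  rw [star_star] at hL
  have h1 : ‖star (βi y)‖ = ‖βi y‖ := norm_star _
  rw [h1] at hL
  have h2 := hKb x ⟨hx1, hx2⟩
  have h3 := hLβ_nonneg x hx1
  have h4 := hLβ_nonneg (star y) (star_mem hy.1)
  have h5 : (0 : ℝ) ≤ ‖βi y‖ := norm_nonneg _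
  nlinarith [mul_le_mul_of_nonneg_left h2 h4, mul_nonneg (mul_nonneg h4 hK0) h3,
    mul_nonneg h5 (norm_nonneg x)]


end
end

section
/- Let A be a unital C*-algebra carrying a strongly continuous circle action σ and let 𝒜 ⊆ A be a norm-dense unital *-subalgebra which is generated as a unital *-algebra by the subspace 𝒜 ∩ A_1. Then: (1) σ_λ(𝒜) = 𝒜 for all λ ∈ S¹, and for every a ∈ 𝒜 the quantity sup_{λ ∈ S¹, λ ≠ 1} ‖σ_λ(a) − a‖/ℓ(λ) is finite (i.e. 𝒜 ⊆ Lip_{S¹}(A)); (2) P_n(𝒜) = 𝒜 ∩ A_n for all n ∈ ℤ; (3) the linear map a ↦ (P_n(a))_{n ∈ ℤ} is a bijection from 𝒜 onto the algebraic direct sum ⨁_{n ∈ ℤ} (𝒜 ∩ A_n); in particular, for each a ∈ 𝒜 one has P_n(a) ∈ 𝒜 for all n, P_n(a) = 0 for all but finitely many n, and a = ∑_{n ∈ ℤ} P_n(a). -/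
/-!
Statement 4: If a norm-dense unital *-subalgebra `𝒜` of a unital C*-algebra with
strongly continuous circle action is generated as a unital *-algebra by `𝒜 ∩ A_1`, then:
(1) `σ_λ(𝒜) = 𝒜` for all `λ` and `𝒜 ⊆ Lip_{S¹}(A)`;
(2) `P_n(𝒜) = 𝒜 ∩ A_n` for all `n`;
(3) `a ↦ (P_n(a))_n` is a linear bijection from `𝒜` onto `⨁_n (𝒜 ∩ A_n)`;
in particular each `a ∈ 𝒜` has `P_n(a) ∈ 𝒜`, finitely many nonzero `P_n(a)`, and
`a = ∑_n P_n(a)`.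
-/

noncomputable section

open scoped Real

variable {A : Type*} [NormedRing A] [StarRing A] [CStarRing A] [NormedAlgebra ℂ A]
  [StarModule ℂ A] [CompleteSpace A]

/-- The function `ℓ : S¹ → [0, π]`. -/
def ell (lam : Circle) : ℝ := |Complex.arg (lam : ℂ)|

set_option linter.unusedSectionVars false
set_option maxHeartbeats 1000000

lemma sigma_zero (S : CircleAction A) (g : Circle) : S.σ g 0 = 0 := by
  have := S.map_smul g 0 0; simpa using this

lemma integrand_cont (S : CircleAction A) (n : ℤ) (a : A) :
    Continuous fun t : ℝ => Complex.exp (-(n : ℂ) * t * Complex.I) • S.σ (Circle.exp t) a := by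
  apply Continuous.smul
  · exact Complex.continuous_exp.comp (by fun_prop)
  · exact (S.strong_continuity a).comp Circle.exp.continuous

lemma integrand_integrable (S : CircleAction A) (n : ℤ) (a : A) :
    IntervalIntegrable (fun t : ℝ => Complex.exp (-(n : ℂ) * t * Complex.I) • S.σ (Circle.exp t) a)
      MeasureTheory.volume 0 (2 * π) :=
  (integrand_cont S n a).intervalIntegrable _ _

lemma specProj_add (S : CircleAction A) (n : ℤ) (a b : A) :
    specProj S n (a + b) = specProj S n a + specProj S n b := by
  unfold specProj
  rw [← smul_add, ← intervalIntegral.integral_add (integrand_integrable S n a)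
    (integrand_integrable S n b)]
  congr 1
  apply intervalIntegral.integral_congr
  intro t _
  simp [S.map_add, smul_add]

lemma specProj_zero (S : CircleAction A) (n : ℤ) : specProj S n 0 = 0 := by
  unfold specProj
  simp [sigma_zero]

lemma specProj_sum (S : CircleAction A) (n : ℤ) {ι : Type*} (F : Finset ι) (f : ι → A) :
    specProj S n (∑ i ∈ F, f i) = ∑ i ∈ F, specProj S n (f i) := by
  classical
  induction F using Finset.induction with
  | empty => simp [specProj_zero]
  | insert s t h ih => simp [Finset.sum_insert h, specProj_add, ih]

lemma specProj_of_mem (S : CircleAction A) {m : ℤ} {x : A} (hx : x ∈ specSub S m) (n : ℤ) :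
    specProj S n x = if n = m then x else 0 := by
  have key : ∀ t : ℝ, Complex.exp (-(n : ℂ) * t * Complex.I) • S.σ (Circle.exp t) x
      = Complex.exp ((((m : ℂ) - n) * Complex.I) * t) • x := by
    intro t
    rw [hx (Circle.exp t), smul_smul]
    congr 1
    rw [Circle.coe_exp, ← Complex.exp_int_mul, ← Complex.exp_add]
    ring_nf
  unfold specProj
  simp only [key]
  rw [intervalIntegral.integral_smul_const, smul_smul]
  by_cases h : n = m
  · subst h
    rw [if_pos rfl]
    have e1 : (∫ t in (0:ℝ)..(2*π), Complex.exp ((((n:ℂ) - n) * Complex.I) * t))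
        = ((2*π : ℝ) : ℂ) := by
      norm_num
    rw [e1, ← Complex.ofReal_mul, inv_mul_cancel₀ (by positivity : (2*π:ℝ) ≠ 0)]
    simp
  · rw [if_neg h]
    have hc0 : ((m : ℂ) - n) ≠ 0 := sub_ne_zero.mpr (by exact_mod_cast Ne.symm h)
    have hc : ((m : ℂ) - n) * Complex.I ≠ 0 := mul_ne_zero hc0 Complex.I_ne_zero
    rw [integral_exp_mul_complex hc]
    have h1 : Complex.exp (((m:ℂ) - n) * Complex.I * ((2*π:ℝ):ℂ)) = 1 := by
      have h2 := Complex.exp_int_mul_two_pi_mul_I (m - n)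
      rw [← h2]
      congr 1
      push_cast
      ring
    rw [h1]
    simp

set_option linter.unusedSectionVars false

def specSubmodule (S : CircleAction A) (n : ℤ) : Submodule ℂ A where
  carrier := specSub S n
  add_mem' {a b} ha hb := fun lam => by rw [S.map_add, ha lam, hb lam, smul_add]
  zero_mem' := fun lam => by rw [sigma_zero]; simp
  smul_mem' c a ha := fun lam => by rw [S.map_smul, ha lam, smul_comm]

lemma one_mem_specSub (S : CircleAction A) : (1 : A) ∈ specSub S 0 := fun lam => by
  simp [S.map_unit]

lemma mul_mem_specSub (S : CircleAction A) {m k : ℤ} {a b : A}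
    (ha : a ∈ specSub S m) (hb : b ∈ specSub S k) : a * b ∈ specSub S (m + k) := by
  intro lam
  rw [S.map_mul, ha lam, hb lam, smul_mul_smul_comm, zpow_add₀ lam.coe_ne_zero]

lemma star_mem_specSub (S : CircleAction A) {m : ℤ} {a : A}
    (ha : a ∈ specSub S m) : star a ∈ specSub S (-m) := by
  intro lam
  rw [S.map_star, ha lam, star_smul]
  congr 1
  rw [RCLike.star_def, map_zpow₀, ← Circle.coe_inv_eq_conj, Circle.coe_inv, inv_zpow,
    ← zpow_neg]

lemma decomp (S : CircleAction A) (𝒜 : StarSubalgebra ℂ A)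
    (hgen : 𝒜 = StarAlgebra.adjoin ℂ ((𝒜 : Set A) ∩ specSub S 1)) :
    ∀ a ∈ 𝒜, ∃ (F : Finset ℤ) (x : ℤ → A),
      (∀ n, x n ∈ (𝒜 : Set A) ∩ specSub S n) ∧ (∀ n ∉ F, x n = 0) ∧ a = ∑ n ∈ F, x n := by
  classical
  set M : ℤ → Submodule ℂ A := fun n => 𝒜.toSubmodule ⊓ specSubmodule S n with hM
  set T : Submodule ℂ A := ⨆ n, M n with hT
  -- closure properties of T
  have hmulMM : ∀ (m k : ℤ) (a : A), a ∈ M m → ∀ b ∈ M k, a * b ∈ T := by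
    intro m k a ha b hb
    have h1 : a * b ∈ 𝒜 := mul_mem (show a ∈ 𝒜 from ha.1) (show b ∈ 𝒜 from hb.1)
    exact Submodule.mem_iSup_of_mem (m + k) ⟨h1, mul_mem_specSub S ha.2 hb.2⟩
  have hmul : ∀ a ∈ T, ∀ b ∈ T, a * b ∈ T := by
    intro a ha
    refine Submodule.iSup_induction M (motive := fun a => ∀ b ∈ T, a * b ∈ T) ha ?_ ?_ ?_
    · intro m a ham b hb
      refine Submodule.iSup_induction M (motive := fun b => a * b ∈ T) hb ?_ ?_ ?_
      · intro k b hbk; exact hmulMM m k a ham b hbk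
      · simp
      · intro x y hx hy; rw [mul_add]; exact add_mem hx hy
    · intro b _; simp
    · intro x y hx hy b hb; rw [add_mul]; exact add_mem (hx b hb) (hy b hb)
  have hstar : ∀ a ∈ T, star a ∈ T := by
    intro a ha
    refine Submodule.iSup_induction M (motive := fun a => star a ∈ T) ha ?_ (by simp) ?_
    · intro m a ham
      have h1 : star a ∈ 𝒜 := star_mem (show a ∈ 𝒜 from ham.1)
      exact Submodule.mem_iSup_of_mem (-m) ⟨h1, star_mem_specSub S ham.2⟩
    · intro x y hx hy; rw [star_add]; exact add_mem hx hy
  have hone : (1 : A) ∈ T := Submodule.mem_iSup_of_mem 0 ⟨one_mem 𝒜, one_mem_specSub S⟩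
  -- T as a star subalgebra
  let T' : StarSubalgebra ℂ A :=
    { toSubalgebra := T.toSubalgebra hone (fun x y hx hy => hmul x hx y hy)
      star_mem' := fun {a} ha => hstar a ha }
  have hsub : (𝒜 : Set A) ⊆ T := by
    intro a ha
    rw [hgen] at ha
    have : StarAlgebra.adjoin ℂ ((𝒜 : Set A) ∩ specSub S 1) ≤ T' := by
      apply StarAlgebra.adjoin_le
      intro x hx
      exact Submodule.mem_iSup_of_mem 1 ⟨hx.1, hx.2⟩
    exact this ha
  -- extraction
  intro a ha
  have haT : a ∈ T := hsub ha
  refine Submodule.iSup_induction M (motive := fun a => ∃ (F : Finset ℤ) (x : ℤ → A),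
      (∀ n, x n ∈ (𝒜 : Set A) ∩ specSub S n) ∧ (∀ n ∉ F, x n = 0) ∧ a = ∑ n ∈ F, x n)
      haT ?_ ?_ ?_
  · intro m a ham
    refine ⟨{m}, fun n => if n = m then a else 0, ?_, ?_, by simp⟩
    · intro n
      by_cases h : n = m
      · subst h; simpa using ⟨ham.1, ham.2⟩
      · simp only [if_neg h]
        exact ⟨(𝒜 : Set A).mem_of_eq_of_mem rfl (zero_mem 𝒜), (specSubmodule S n).zero_mem⟩
    · intro n hn; simp only [Finset.mem_singleton] at hn; simp [hn]
  · exact ⟨∅, 0, fun n => ⟨zero_mem 𝒜, (specSubmodule S n).zero_mem⟩, by simp, by simp⟩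
  · rintro x y ⟨F, u, hu1, hu2, hu3⟩ ⟨G, v, hv1, hv2, hv3⟩
    refine ⟨F ∪ G, u + v, fun n => ⟨add_mem (hu1 n).1 (hv1 n).1,
      (specSubmodule S n).add_mem (hu1 n).2 (hv1 n).2⟩, ?_, ?_⟩
    · intro n hn
      simp only [Finset.mem_union, not_or] at hn
      simp [hu2 n hn.1, hv2 n hn.2]
    · have e1 : ∑ n ∈ F ∪ G, u n = ∑ n ∈ F, u n :=
        (Finset.sum_subset Finset.subset_union_left (fun n _ hn => hu2 n hn)).symm
      have e2 : ∑ n ∈ F ∪ G, v n = ∑ n ∈ G, v n :=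
        (Finset.sum_subset Finset.subset_union_right (fun n _ hn => hv2 n hn)).symm
      simp only [Pi.add_apply, Finset.sum_add_distrib, e1, e2, hu3, hv3]

lemma sigma_sum (S : CircleAction A) (g : Circle) {ι : Type*} (F : Finset ι) (f : ι → A) :
    S.σ g (∑ i ∈ F, f i) = ∑ i ∈ F, S.σ g (f i) := by
  classical
  induction F using Finset.induction with
  | empty => simp [sigma_zero]
  | insert s t h ih => simp [Finset.sum_insert h, S.map_add, ih]

lemma norm_exp_mul_I_sub_one_le' (x : ℝ) :
    ‖Complex.exp (x * Complex.I) - 1‖ ≤ |x| := by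
  have hn : Complex.normSq (Complex.exp ((x:ℂ) * Complex.I) - 1) = 2 - 2 * Real.cos x := by
    rw [Complex.exp_mul_I]
    simp [Complex.normSq_apply, Complex.cos_ofReal_re, Complex.sin_ofReal_re,
      Complex.cos_ofReal_im, Complex.sin_ofReal_im]
    nlinarith [Real.sin_sq_add_cos_sq x]
  rw [Complex.norm_def, hn]
  have h1 : 2 - 2 * Real.cos x ≤ x ^ 2 := by
    nlinarith [Real.one_sub_sq_div_two_le_cos (x := x)]
  calc Real.sqrt (2 - 2 * Real.cos x) ≤ Real.sqrt (x ^ 2) := Real.sqrt_le_sqrt h1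
    _ = |x| := Real.sqrt_sq_eq_abs x

lemma norm_zpow_sub_one_le (lam : Circle) (n : ℤ) :
    ‖(lam : ℂ) ^ n - 1‖ ≤ |(n : ℝ)| * ell lam := by
  have h : (lam : ℂ) = Complex.exp ((Complex.arg (lam : ℂ) : ℂ) * Complex.I) := by
    rw [← Circle.coe_exp, Circle.exp_arg]
  have key : (lam : ℂ) ^ n
      = Complex.exp (((n * Complex.arg (lam : ℂ) : ℝ) : ℂ) * Complex.I) := by
    conv_lhs => rw [h]
    rw [← Complex.exp_int_mul]
    congr 1
    push_cast; ring
  rw [ell, key]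
  calc ‖Complex.exp (((n * Complex.arg (lam : ℂ) : ℝ) : ℂ) * Complex.I) - 1‖
      ≤ |n * Complex.arg (lam : ℂ)| := norm_exp_mul_I_sub_one_le' _
    _ = |(n : ℝ)| * |Complex.arg (lam : ℂ)| := abs_mul _ _

theorem generated_in_degree_one_decomposition
    (S : CircleAction A) (𝒜 : StarSubalgebra ℂ A) (hdense : Dense (𝒜 : Set A))
    (hgen : 𝒜 = StarAlgebra.adjoin ℂ ((𝒜 : Set A) ∩ specSub S 1)) :
    -- (1) `σ_λ(𝒜) = 𝒜` and `𝒜 ⊆ Lip_{S¹}(A)`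
    ((∀ lam : Circle, S.σ lam '' (𝒜 : Set A) = (𝒜 : Set A)) ∧
      ∀ a ∈ 𝒜, ∃ C : ℝ, ∀ lam : Circle, lam ≠ 1 → ‖S.σ lam a - a‖ ≤ C * ell lam) ∧
    -- (2) `P_n(𝒜) = 𝒜 ∩ A_n`
    (∀ n : ℤ, specProj S n '' (𝒜 : Set A) = (𝒜 : Set A) ∩ specSub S n) ∧
    -- (3) `a ↦ (P_n(a))_n` is a bijection onto the algebraic direct sum
    ((∀ a ∈ 𝒜, (∀ n : ℤ, specProj S n a ∈ 𝒜) ∧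
        {n : ℤ | specProj S n a ≠ 0}.Finite ∧
        (∀ F : Finset ℤ, {n : ℤ | specProj S n a ≠ 0} ⊆ (F : Set ℤ) →
          a = ∑ n ∈ F, specProj S n a)) ∧
      (∀ a ∈ 𝒜, ∀ b ∈ 𝒜, (∀ n : ℤ, specProj S n a = specProj S n b) → a = b) ∧
      (∀ x : ℤ → A, (∀ n : ℤ, x n ∈ (𝒜 : Set A) ∩ specSub S n) →
        {n : ℤ | x n ≠ 0}.Finite →
        ∃ a ∈ 𝒜, ∀ n : ℤ, specProj S n a = x n)) := by
  classical
  -- the master decomposition fact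
  have main : ∀ a ∈ 𝒜, ∃ (F : Finset ℤ) (x : ℤ → A),
      (∀ n, x n ∈ (𝒜 : Set A) ∩ specSub S n) ∧ (∀ n ∉ F, x n = 0) ∧ (a = ∑ n ∈ F, x n) ∧
      (∀ n, specProj S n a = x n) := by
    intro a ha
    obtain ⟨F, x, h1, h2, h3⟩ := decomp S 𝒜 hgen a ha
    refine ⟨F, x, h1, h2, h3, ?_⟩
    intro n
    rw [h3, specProj_sum]
    rw [Finset.sum_congr rfl (fun m _ => specProj_of_mem S (h1 m).2 n), Finset.sum_ite_eq]
    by_cases h : n ∈ F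
    · simp [h]
    · simp [h, h2 n h]
  -- part (3a)
  have part3a : ∀ a ∈ 𝒜, (∀ n : ℤ, specProj S n a ∈ 𝒜) ∧
      {n : ℤ | specProj S n a ≠ 0}.Finite ∧
      (∀ F : Finset ℤ, {n : ℤ | specProj S n a ≠ 0} ⊆ (F : Set ℤ) →
        a = ∑ n ∈ F, specProj S n a) := by
    intro a ha
    obtain ⟨F, x, h1, h2, h3, h4⟩ := main a ha
    have hvan : ∀ n ∉ F, specProj S n a = 0 := fun n hn => by rw [h4 n]; exact h2 n hn
    refine ⟨fun n => by rw [h4 n]; exact (h1 n).1, ?_, ?_⟩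
    · exact F.finite_toSet.subset (fun n hn => by_contra fun hnF => hn (hvan n hnF))
    · intro G hG
      calc a = ∑ n ∈ F, x n := h3
        _ = ∑ n ∈ F, specProj S n a := Finset.sum_congr rfl fun n _ => (h4 n).symm
        _ = ∑ n ∈ F ∪ G, specProj S n a :=
            Finset.sum_subset Finset.subset_union_left (fun n _ hn => hvan n hn)
        _ = ∑ n ∈ G, specProj S n a := by
            refine (Finset.sum_subset Finset.subset_union_right (fun n _ hn => ?_)).symm
            by_contra hne
            exact hn (hG hne)
  refine ⟨⟨?_, ?_⟩, ?_, part3a, ?_, ?_⟩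
  -- (1a) σ_λ(𝒜) = 𝒜
  · have himg : ∀ lam : Circle, ∀ a ∈ 𝒜, S.σ lam a ∈ 𝒜 := by
      intro lam a ha
      obtain ⟨F, x, h1, h2, h3, h4⟩ := main a ha
      rw [h3, sigma_sum]
      refine sum_mem (fun n _ => ?_)
      rw [(h1 n).2 lam]
      exact SMulMemClass.smul_mem _ (h1 n).1
    intro lam
    ext a
    constructor
    · rintro ⟨b, hb, rfl⟩
      exact himg lam b hb
    · intro ha
      refine ⟨S.σ lam⁻¹ a, himg lam⁻¹ a ha, ?_⟩
      rw [← S.map_mul_apply, mul_inv_cancel, S.map_one_apply]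
  -- (1b) Lipschitz
  · intro a ha
    obtain ⟨F, x, h1, h2, h3, h4⟩ := main a ha
    refine ⟨∑ n ∈ F, |(n : ℝ)| * ‖x n‖, fun lam _ => ?_⟩
    have e : S.σ lam a - a = ∑ n ∈ F, ((lam : ℂ) ^ n - 1) • x n := by
      rw [h3, sigma_sum, ← Finset.sum_sub_distrib]
      refine Finset.sum_congr rfl fun n _ => ?_
      rw [(h1 n).2 lam, sub_smul, one_smul]
    rw [e, Finset.sum_mul]
    refine (norm_sum_le _ _).trans (Finset.sum_le_sum fun n _ => ?_)
    rw [norm_smul]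
    have hb := norm_zpow_sub_one_le lam n
    have hx : (0:ℝ) ≤ ‖x n‖ := norm_nonneg _
    calc ‖(lam : ℂ) ^ n - 1‖ * ‖x n‖ ≤ (|(n : ℝ)| * ell lam) * ‖x n‖ := by gcongr
      _ = |(n : ℝ)| * ‖x n‖ * ell lam := by ring
  -- (2)
  · intro n
    ext y
    constructor
    · rintro ⟨b, hb, rfl⟩
      obtain ⟨F, x, h1, h2, h3, h4⟩ := main b hb
      rw [h4 n]
      exact ⟨(h1 n).1, (h1 n).2⟩
    · rintro ⟨hy1, hy2⟩
      exact ⟨y, hy1, by rw [specProj_of_mem S hy2 n, if_pos rfl]⟩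
  -- (3b) injectivity
  · intro a ha b hb hab
    obtain ⟨_, hfa, hsum_a⟩ := part3a a ha
    obtain ⟨_, hfb, hsum_b⟩ := part3a b hb
    set G : Finset ℤ := hfa.toFinset ∪ hfb.toFinset with hG
    have hGa : {n : ℤ | specProj S n a ≠ 0} ⊆ (G : Set ℤ) := fun n hn =>
      Finset.mem_coe.mpr (Finset.mem_union_left _ (hfa.mem_toFinset.mpr hn))
    have hGb : {n : ℤ | specProj S n b ≠ 0} ⊆ (G : Set ℤ) := fun n hn =>
      Finset.mem_coe.mpr (Finset.mem_union_right _ (hfb.mem_toFinset.mpr hn))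
    calc a = ∑ n ∈ G, specProj S n a := hsum_a G hGa
      _ = ∑ n ∈ G, specProj S n b := Finset.sum_congr rfl fun n _ => hab n
      _ = b := (hsum_b G hGb).symm
  -- (3c) surjectivity
  · intro x hx hfin
    set F : Finset ℤ := hfin.toFinset with hF
    refine ⟨∑ n ∈ F, x n, sum_mem (fun n _ => (hx n).1), fun n => ?_⟩
    rw [specProj_sum, Finset.sum_congr rfl (fun m _ => specProj_of_mem S (hx m).2 n),
      Finset.sum_ite_eq]
    by_cases h : n ∈ F
    · simp [h]
    · have : x n = 0 := by
        by_contra hne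
        exact h (hfin.mem_toFinset.mpr hne)
      simp [h, this]

end
end

section
/- Suppose the twisted geometric data assumption holds: A is a unital C*-algebra with a strongly continuous circle action σ, 𝒜 ⊆ A is a norm-dense unital *-subalgebra generated as a *-algebra by 𝒜 ∩ A_1, H is a complex Hilbert space, φ : A → B(H) is a unital *-homomorphism, δ : 𝒜 → B(H) is a ℂ-linear map, μ > 0 is a constant, and the twisted Leibniz rule δ(ab) = δ(a)φ(b) + μ^n φ(a)δ(b) holds whenever a ∈ 𝒜 ∩ A_n for some n ∈ ℤ and b ∈ 𝒜. Let n ∈ ℤ and let ζ_1,…,ζ_{m_n} ∈ 𝒜 ∩ A_n satisfy ∑_{j=1}^{m_n} ζ_j ζ_j* = 1 and ∑_{j=1}^{m_n} φ(ζ_j) δ(ζ_j*) = 0. Then for every x ∈ 𝒜 ∩ A_n one has the operator identity ∑_{j=1}^{m_n} φ(ζ_j) δ(ζ_j* x) = μ^{-n} δ(x) in B(H). (Through the canonical isometry Φ_n, this says that the Grassmann connection ∇_Gr associated with the frame {ζ_j} satisfies Φ_n(∇_Gr(x))ξ = μ^{-n} δ(x)ξ for all ξ in the base Hilbert space; in particular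 ∇_Gr is independent of the choice of such a frame.) -/
noncomputable section

open scoped Real

variable {A : Type*} [NormedRing A] [StarRing A] [CStarRing A] [NormedAlgebra ℂ A]
  [StarModule ℂ A] [CompleteSpace A]

/-!
Statement 6 (Grassmann connection computation): Under the twisted geometric data
assumption, if `ζ_1, …, ζ_{m_n} ∈ 𝒜 ∩ A_n` satisfy `∑_j ζ_j ζ_j* = 1` and
`∑_j φ(ζ_j) δ(ζ_j*) = 0`, then for every `x ∈ 𝒜 ∩ A_n` one has
`∑_j φ(ζ_j) δ(ζ_j* x) = μ^{-n} δ(x)` in `B(H)`; through the canonical isometry this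
computes the Grassmann connection of the frame, and shows it is frame-independent.
-/

theorem grassmann_connection_formula
    {H : Type*} [NormedAddCommGroup H] [InnerProductSpace ℂ H] [CompleteSpace H]
    (S : CircleAction A) (𝒜 : StarSubalgebra ℂ A) (hdense : Dense (𝒜 : Set A))
    (hgen : 𝒜 = StarAlgebra.adjoin ℂ ((𝒜 : Set A) ∩ specSub S 1))
    (φ : A →⋆ₐ[ℂ] (H →L[ℂ] H)) (δ : A → (H →L[ℂ] H))
    (hδ_add : ∀ a ∈ 𝒜, ∀ b ∈ 𝒜, δ (a + b) = δ a + δ b)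
    (hδ_smul : ∀ (c : ℂ), ∀ a ∈ 𝒜, δ (c • a) = c • δ a)
    (μ : ℝ) (hμ : 0 < μ)
    (hLeibniz : ∀ n : ℤ, ∀ a ∈ (𝒜 : Set A) ∩ specSub S n, ∀ b ∈ 𝒜,
      δ (a * b) = δ a * φ b + ((μ : ℂ) ^ n) • (φ a * δ b))
    (n : ℤ) (mn : ℕ) (ζ : Fin mn → A)
    (hζ : ∀ j, ζ j ∈ 𝒜 ∧ ζ j ∈ specSub S n)
    (hζ_frame : ∑ j, ζ j * star (ζ j) = 1)
    (hζ_vanish : ∑ j, φ (ζ j) * δ (star (ζ j)) = 0) :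
    ∀ x ∈ (𝒜 : Set A) ∩ specSub S n,
      ∑ j, φ (ζ j) * δ (star (ζ j) * x) = ((μ : ℂ) ^ (-n)) • δ x := by
  intro x hx
  -- star ζ j lies in 𝒜 ∩ A_{-n}
  have hstar : ∀ j, star (ζ j) ∈ (𝒜 : Set A) ∩ specSub S (-n) := by
    intro j
    refine ⟨star_mem (hζ j).1, ?_⟩
    intro lam
    have h1 := S.map_star lam (ζ j)
    rw [(hζ j).2 lam] at h1
    rw [h1, star_smul]
    congr 1
    rw [star_zpow₀,
      show star ((lam : ℂ)) = ((lam⁻¹ : Circle) : ℂ) by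
        rw [Circle.coe_inv_eq_conj, starRingEnd_apply],
      zpow_neg, ← inv_zpow]
    norm_cast
  have key : ∀ j, δ (star (ζ j) * x) =
      δ (star (ζ j)) * φ x + ((μ : ℂ) ^ (-n)) • (φ (star (ζ j)) * δ x) :=
    fun j => hLeibniz (-n) (star (ζ j)) (hstar j) x hx.1
  calc ∑ j, φ (ζ j) * δ (star (ζ j) * x)
      = (∑ j, φ (ζ j) * δ (star (ζ j))) * φ x
        + ((μ : ℂ) ^ (-n)) • ((∑ j, φ (ζ j * star (ζ j))) * δ x) := by
        rw [Finset.sum_mul, Finset.sum_mul, Finset.smul_sum, ← Finset.sum_add_distrib]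
        refine Finset.sum_congr rfl fun j _ => ?_
        rw [key j, mul_add, mul_smul_comm, map_mul, mul_assoc (φ (ζ j)) (φ (star (ζ j))) (δ x),
          ← mul_assoc (φ (ζ j)) (δ (star (ζ j))) (φ x)]
    _ = ((μ : ℂ) ^ (-n)) • δ x := by
        rw [hζ_vanish, zero_mul, zero_add, ← map_sum, hζ_frame, map_one, one_mul]


end
end

section
/- Let H be a complex Hilbert space and let (V_s)_{s ∈ ℝ} be a strongly continuous one-parameter group of unitary operators on H (V_{s+t} = V_s V_t, V_0 = 1, and s ↦ V_s ξ is norm continuous for each ξ ∈ H). For r ∈ ℝ let I_r be the closed horizontal strip of complex numbers whose imaginary part lies between 0 and r. Let r ∈ ℝ and let T be a bounded operator on H which is analytic of order r, i.e. there exists a map f_T : I_r → B(H), norm continuous on I_r and holomorphic on the interior of I_r, with f_T(s) = V_s T V_s* for all s ∈ ℝ. Let z ∈ I_r with imaginary part t = Im(z), and let ξ ∈ H be a vector admitting a map f_ξ : I_t → H, norm continuous on I_t and holomorphic on the interior of I_t, with f_ξ(s) = V_s ξ for all s ∈ ℝ (by the Pedersen–Takesaki characterization this exactly says that ξ belongs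 to the domain of V_z := e^{izE}, where E is the Stone generator of the group, with V_z ξ = f_ξ(z)). Then the vector Tξ admits a map g : I_t → H, norm continuous on I_t and holomorphic on the interior of I_t, with g(s) = V_s(Tξ) for all s ∈ ℝ and g(z) = f_T(z)(f_ξ(z)); that is, T preserves the domain of V_z and V_z(Tξ) = β_z(T) V_z(ξ), where β_z(T) := f_T(z). -/
/-!
Statement 8: If `(V_s)` is a strongly continuous one-parameter unitary group on a Hilbert
space `H`, `T` is a bounded operator which is analytic of order `r` (witnessed by `f_T`),
`z` lies in the strip `I_r`, and `ξ ∈ H` admits an analytic extension `f_ξ` of `s ↦ V_s ξ`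
to the strip `I_{Im z}` (i.e. `ξ ∈ Dom(V_z)` with `V_z ξ = f_ξ(z)`), then `Tξ` admits an
analytic extension `g` of `s ↦ V_s (Tξ)` to `I_{Im z}` with `g(z) = f_T(z)(f_ξ(z))`;
i.e. `T` preserves `Dom(V_z)` and `V_z(Tξ) = β_z(T) V_z(ξ)`.
-/

noncomputable section

/-- The closed horizontal strip of complex numbers whose imaginary part lies
between `0` and `r`. -/
def strip (r : ℝ) : Set ℂ := {z : ℂ | z.im ∈ Set.uIcc 0 r}

theorem analytic_operator_preserves_domain
    {H : Type*} [NormedAddCommGroup H] [InnerProductSpace ℂ H] [CompleteSpace H]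
    (V : ℝ → H →L[ℂ] H)
    (hV_zero : V 0 = 1)
    (hV_add : ∀ s t : ℝ, V (s + t) = (V s).comp (V t))
    (hV_unitary : ∀ s : ℝ, ContinuousLinearMap.adjoint (V s) = V (-s))
    (hV_cont : ∀ ξ : H, Continuous fun s : ℝ => V s ξ)
    (r : ℝ) (T : H →L[ℂ] H) (fT : ℂ → (H →L[ℂ] H))
    (hfT_cont : ContinuousOn fT (strip r))
    (hfT_holo : DifferentiableOn ℂ fT (interior (strip r)))
    (hfT_real : ∀ s : ℝ, fT (s : ℂ) = ((V s).comp T).comp (V (-s)))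
    (z : ℂ) (hz : z ∈ strip r)
    (ξ : H) (fξ : ℂ → H)
    (hfξ_cont : ContinuousOn fξ (strip z.im))
    (hfξ_holo : DifferentiableOn ℂ fξ (interior (strip z.im)))
    (hfξ_real : ∀ s : ℝ, fξ (s : ℂ) = V s ξ) :
    ∃ g : ℂ → H,
      ContinuousOn g (strip z.im) ∧
      DifferentiableOn ℂ g (interior (strip z.im)) ∧
      (∀ s : ℝ, g (s : ℂ) = V s (T ξ)) ∧
      g z = fT z (fξ z) := by
  have hsub : strip z.im ⊆ strip r := by
    intro w hw
    exact Set.uIcc_subset_uIcc Set.left_mem_uIcc hz hw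
  have hisub : interior (strip z.im) ⊆ interior (strip r) := interior_mono hsub
  refine ⟨fun w => fT w (fξ w), ?_, ?_, ?_, rfl⟩
  · exact (isBoundedBilinearMap_apply.continuous).comp_continuousOn
      (((hfT_cont.mono hsub).prodMk hfξ_cont))
  · exact (hfT_holo.mono hisub).clm_apply hfξ_holo
  · intro s
    show fT s (fξ s) = V s (T ξ)
    rw [hfT_real, hfξ_real]
    simp only [ContinuousLinearMap.comp_apply]
    have : V (-s) (V s ξ) = ξ := by
      have := congrArg (fun A : H →L[ℂ] H => A ξ) ((hV_add (-s) s).symm)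
      simpa [hV_zero] using this
    rw [this]

end
end

section
/- Let B be a unital *-algebra over ℂ, let q ∈ (0,1), let r ∈ ℕ, and let z_1,…,z_{r+1} ∈ B be elements satisfying the Vaksman–Soibelman sphere relations: z_1* z_1 = z_1 z_1*; z_i* z_i − z_i z_i* = (1 − q²)·∑_{j=1}^{i−1} z_j z_j* for every i with 2 ≤ i ≤ r+1; and ∑_{j=1}^{r+1} z_j z_j* = 1. Then ∑_{j=1}^{r+1} q^{2(r+1−j)} z_j* z_j = 1. -/
/-!
Statement 10: In a unital *-algebra over ℂ, elements `z_1, …, z_{r+1}` satisfying the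
Vaksman–Soibelman sphere relations
`z_1* z_1 = z_1 z_1*`,
`z_i* z_i - z_i z_i* = (1 - q²) ∑_{j<i} z_j z_j*` (for `i ≥ 2`), and
`∑_j z_j z_j* = 1`
satisfy `∑_{j=1}^{r+1} q^{2(r+1-j)} z_j* z_j = 1`.
-/

theorem vaksman_soibelman_left_frame
    {B : Type*} [Ring B] [Algebra ℂ B] [StarRing B] [StarModule ℂ B]
    (q : ℝ) (hq0 : 0 < q) (hq1 : q < 1) (r : ℕ) (z : Fin (r + 1) → B)
    (h_normal : star (z 0) * z 0 = z 0 * star (z 0))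
    (h_comm : ∀ i : Fin (r + 1), 1 ≤ (i : ℕ) →
      star (z i) * z i - z i * star (z i)
        = ((1 : ℂ) - (q : ℂ) ^ 2) •
            ∑ j ∈ Finset.univ.filter (fun j : Fin (r + 1) => (j : ℕ) < (i : ℕ)),
              z j * star (z j))
    (h_sum : ∑ j : Fin (r + 1), z j * star (z j) = 1) :
    ∑ j : Fin (r + 1), ((q : ℂ) ^ (2 * (r - (j : ℕ)))) • (star (z j) * z j) = 1 := by
  have key : ∀ k : ℕ, k ≤ r →
      ∑ j ∈ Finset.univ.filter (fun j : Fin (r + 1) => (j : ℕ) ≤ k),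
        ((q : ℂ) ^ (2 * (k - (j : ℕ)))) • (star (z j) * z j)
      = ∑ j ∈ Finset.univ.filter (fun j : Fin (r + 1) => (j : ℕ) ≤ k),
          z j * star (z j) := by
    intro k
    induction k with
    | zero =>
      intro _
      have h0 : Finset.univ.filter (fun j : Fin (r + 1) => (j : ℕ) ≤ 0)
          = {(0 : Fin (r + 1))} := by
        ext j
        simp only [Finset.mem_filter, Finset.mem_univ, true_and, Finset.mem_singleton,
          Fin.ext_iff, Fin.val_zero]
        omega
      rw [h0]
      simp [h_normal]
    | succ k ih =>
      intro hk
      have hk' : k ≤ r := le_of_lt (Nat.lt_of_succ_le hk)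
      have hkr : k + 1 < r + 1 := Nat.lt_succ_of_le hk
      set i : Fin (r + 1) := ⟨k + 1, hkr⟩ with hi
      have hins : Finset.univ.filter (fun j : Fin (r + 1) => (j : ℕ) ≤ k + 1)
          = insert i (Finset.univ.filter (fun j : Fin (r + 1) => (j : ℕ) ≤ k)) := by
        ext j
        simp only [Finset.mem_filter, Finset.mem_univ, true_and, Finset.mem_insert,
          Fin.ext_iff, hi]
        omega
      have hni : i ∉ Finset.univ.filter (fun j : Fin (r + 1) => (j : ℕ) ≤ k) := by
        simp [hi]
      rw [hins, Finset.sum_insert hni, Finset.sum_insert hni]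
      have hexp : ∀ j ∈ Finset.univ.filter (fun j : Fin (r + 1) => (j : ℕ) ≤ k),
          ((q : ℂ) ^ (2 * (k + 1 - (j : ℕ)))) • (star (z j) * z j)
          = ((q : ℂ) ^ 2) • (((q : ℂ) ^ (2 * (k - (j : ℕ)))) • (star (z j) * z j)) := by
        intro j hj
        have hj' : (j : ℕ) ≤ k := by simpa using hj
        rw [smul_smul, ← pow_add]
        congr 2
        omega
      rw [Finset.sum_congr rfl hexp, ← Finset.smul_sum, ih hk']
      have hcomm := h_comm i (by simp [hi])
      have hfilt : Finset.univ.filter (fun j : Fin (r + 1) => (j : ℕ) < (i : ℕ))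
          = Finset.univ.filter (fun j : Fin (r + 1) => (j : ℕ) ≤ k) := by
        ext j
        simp only [Finset.mem_filter, Finset.mem_univ, true_and, hi]
        omega
      rw [hfilt] at hcomm
      have hstar : star (z i) * z i
          = z i * star (z i) + ((1 : ℂ) - (q : ℂ) ^ 2) •
              ∑ j ∈ Finset.univ.filter (fun j : Fin (r + 1) => (j : ℕ) ≤ k),
                z j * star (z j) := by
        exact sub_eq_iff_eq_add'.mp hcomm
      have he0 : k + 1 - ((i : ℕ)) = 0 := by simp [hi]
      rw [he0, pow_zero, one_smul, hstar]
      set S := ∑ j ∈ Finset.univ.filter (fun j : Fin (r + 1) => (j : ℕ) ≤ k),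
          z j * star (z j)
      rw [add_assoc, ← add_smul]
      norm_num
  have huniv : Finset.univ.filter (fun j : Fin (r + 1) => (j : ℕ) ≤ r) =
      (Finset.univ : Finset (Fin (r + 1))) := by
    ext j
    simpa using Nat.lt_succ_iff.mp j.isLt
  have := key r le_rfl
  rw [huniv] at this
  rw [this, h_sum]
end
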